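/- arXiv:1506.03343 — 6 statements merged into one kernel-verified Lean document; each statement's English description precedes it below -/
import Mathlib

section
/- Let F : [0,1] → [0,1] be a cumulative distribution function of a probability measure on [0,1], and let F⁻¹ : [0,1] → [0,1] be its right-continuous inverse, F⁻¹(x) = sup{s : F(s) ≤ x}. If X and Y are random variables such that X has distribution function F and Y has distribution function F⁻¹, then E[X²] + E[Y²] ≥ 2/3, with equality if and only if F(x) = x for all x ∈ [0,1]. -/
open MeasureTheory Set

lemma sq_layercake {Ω : Type*} [MeasurableSpace Ω] (ℙ : Measure Ω) [IsProbabilityMeasure ℙ]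
    (W : Ω → ℝ) (hW : Measurable W) (hWr : ∀ᵐ ω ∂ℙ, W ω ∈ Icc (0:ℝ) 1)
    (h : ℝ → ℝ) (hh : ∀ x ∈ Icc (0:ℝ) 1, (ℙ {ω | W ω ≤ x}).toReal = h x) :
    ∫ ω, (W ω)^2 ∂ℙ = ∫ t in Ioo (0:ℝ) 1, (1 - h t) * (2 * t) := by
  set hb : ℝ → ℝ := fun t => (ℙ {ω | W ω ≤ t}).toReal with hbdef
  have hbmono : Monotone hb := by
    intro a b hab
    exact ENNReal.toReal_mono (measure_ne_top _ _)
      (measure_mono (fun ω hω => le_trans hω hab))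
  have hbmeas : Measurable hb := hbmono.measurable
  have hb0 : ∀ t, 0 ≤ hb t := fun t => ENNReal.toReal_nonneg
  have hb1 : ∀ t, hb t ≤ 1 := by
    intro t
    exact ENNReal.toReal_le_of_le_ofReal zero_le_one (by simpa using prob_le_one)
  have hWset : ∀ t : ℝ, MeasurableSet {ω | W ω ≤ t} := fun t => hW measurableSet_Iic
  have hWint : Integrable (fun ω => (W ω)^2) ℙ := by
    apply Integrable.mono' (integrable_const (1:ℝ)) ((hW.pow_const 2).aestronglyMeasurable)
    filter_upwards [hWr] with ω hω
    rw [Real.norm_eq_abs, abs_of_nonneg (sq_nonneg _)]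
    nlinarith [hω.1, hω.2]
  -- layer cake
  have key := lintegral_comp_eq_lintegral_meas_lt_mul ℙ (f := W) (g := fun t => 2*t)
    (by filter_upwards [hWr] with ω hω; exact hω.1) hW.aemeasurable
    (fun t ht => (continuous_const.mul continuous_id).intervalIntegrable 0 t)
    (by filter_upwards [ae_restrict_mem measurableSet_Ioi] with t ht
        simp only [mem_Ioi] at ht; nlinarith)
  have hsq : ∀ x : ℝ, (∫ t in (0:ℝ)..x, 2*t) = x^2 := by
    intro x
    have : (∫ t in (0:ℝ)..x, 2*t) = 2 * ∫ t in (0:ℝ)..x, t := by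
      rw [← intervalIntegral.integral_const_mul]
    rw [this, integral_id]
    ring
  have keyL : ∫⁻ ω, ENNReal.ofReal ((W ω)^2) ∂ℙ
      = ∫⁻ t in Ioi (0:ℝ), ℙ {a | t < W a} * ENNReal.ofReal (2*t) := by
    rw [← key]; congr 1; ext ω; rw [hsq]
  -- rewrite RHS
  have hsplit : ∫⁻ t in Ioi (0:ℝ), ℙ {a | t < W a} * ENNReal.ofReal (2*t)
      = ∫⁻ t in Ioo (0:ℝ) 1, ENNReal.ofReal ((1 - hb t) * (2*t)) := by
    rw [← Ioo_union_Ici_eq_Ioi (zero_lt_one (α := ℝ)),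
      lintegral_union measurableSet_Ici (by
        rw [Set.disjoint_right]; rintro x hx ⟨_, h2⟩; exact absurd h2 (not_lt.mpr hx))]
    have h2 : ∫⁻ t in Ici (1:ℝ), ℙ {a | t < W a} * ENNReal.ofReal (2*t) = 0 := by
      apply (setLIntegral_congr_fun measurableSet_Ici ?_).trans lintegral_zero
      intro t ht
      have : ℙ {a | t < W a} = 0 := by
        apply measure_mono_null (fun ω hω => ?_) (ae_iff.mp hWr)
        simp only [mem_setOf_eq] at hω ⊢
        intro hmem
        exact absurd hω (not_lt.mpr (le_trans hmem.2 ht))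
      simp [this]
    rw [h2, add_zero]
    apply setLIntegral_congr_fun measurableSet_Ioo
    intro t ht
    show ℙ {a | t < W a} * ENNReal.ofReal (2 * t) = ENNReal.ofReal ((1 - hb t) * (2 * t))
    have hc : {a | t < W a} = {ω | W ω ≤ t}ᶜ := by ext a; simp only [mem_setOf_eq, mem_compl_iff, not_le]
    have hprob : ℙ {ω | W ω ≤ t} = ENNReal.ofReal (hb t) := by
      exact (ENNReal.ofReal_toReal (measure_ne_top _ _)).symm
    rw [hc, prob_compl_eq_one_sub (hWset t), hprob,
      ← ENNReal.ofReal_one, ← ENNReal.ofReal_sub _ (hb0 t),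
      ← ENNReal.ofReal_mul (by linarith [hb1 t])]
  -- convert to Bochner
  have hint2 : Integrable (fun t => (1 - hb t) * (2*t)) (volume.restrict (Ioo (0:ℝ) 1)) := by
    apply Integrable.mono' (integrable_const (2:ℝ))
      (((measurable_const.sub hbmeas).mul (measurable_const.mul measurable_id')).aestronglyMeasurable)
    filter_upwards [ae_restrict_mem measurableSet_Ioo] with t ht
    change ‖(1 - hb t) * (2*t)‖ ≤ 2
    rw [Real.norm_eq_abs, abs_mul, abs_of_nonneg (by linarith [hb1 t]),
      abs_of_nonneg (by nlinarith [ht.1.le])]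
    nlinarith [hb0 t, hb1 t, ht.1.le, ht.2.le]
  have hOR1 : ENNReal.ofReal (∫ ω, (W ω)^2 ∂ℙ) = ∫⁻ ω, ENNReal.ofReal ((W ω)^2) ∂ℙ :=
    ofReal_integral_eq_lintegral_ofReal hWint (ae_of_all _ fun ω => sq_nonneg _)
  have hOR2 : ENNReal.ofReal (∫ t in Ioo (0:ℝ) 1, (1 - hb t) * (2*t))
      = ∫⁻ t in Ioo (0:ℝ) 1, ENNReal.ofReal ((1 - hb t) * (2*t)) := by
    apply ofReal_integral_eq_lintegral_ofReal hint2
    filter_upwards [ae_restrict_mem measurableSet_Ioo] with t ht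
    simp only [Pi.zero_apply]
    nlinarith [hb1 t, ht.1.le, ht.2.le]
  have heq : ∫ ω, (W ω)^2 ∂ℙ = ∫ t in Ioo (0:ℝ) 1, (1 - hb t) * (2*t) := by
    have := hOR1.trans (keyL.trans (hsplit.trans hOR2.symm))
    rw [ENNReal.ofReal_eq_ofReal_iff (integral_nonneg (fun ω => sq_nonneg _))] at this
    · exact this
    · apply setIntegral_nonneg measurableSet_Ioo
      intro t ht
      nlinarith [hb1 t, ht.1.le, ht.2.le]
  rw [heq]
  apply setIntegral_congr_fun measurableSet_Ioo
  intro t ht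
  simp only [hbdef]
  rw [hh t (mem_Icc_of_Ioo ht)]

lemma integ_aux {F : ℝ → ℝ} (hF : Monotone F) (hF0 : ∀ t ∈ Ioo (0:ℝ) 1, 0 ≤ F t)
    (hF1 : ∀ t ∈ Ioo (0:ℝ) 1, F t ≤ 1) :
    Integrable (fun t => F t * (2 * t)) (volume.restrict (Ioo (0:ℝ) 1)) := by
  apply Integrable.mono' (integrable_const (2:ℝ))
    ((hF.measurable.mul (measurable_const.mul measurable_id')).aestronglyMeasurable)
  filter_upwards [ae_restrict_mem measurableSet_Ioo] with t ht
  change ‖F t * (2*t)‖ ≤ 2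
  rw [Real.norm_eq_abs, abs_mul, abs_of_nonneg (hF0 t ht), abs_of_nonneg (by nlinarith [ht.1.le])]
  nlinarith [hF0 t ht, hF1 t ht, ht.1.le, ht.2.le]

lemma piece_fst {F : ℝ → ℝ} (hF : Monotone F) (hF0 : ∀ t ∈ Ioo (0:ℝ) 1, 0 ≤ F t)
    (hF1 : ∀ t ∈ Ioo (0:ℝ) 1, F t ≤ 1) :
    ∫⁻ p, {q : ℝ × ℝ | q.2 < F q.1}.indicator (fun q => ENNReal.ofReal (2 * q.1)) p
        ∂((volume.restrict (Ioo (0:ℝ) 1)).prod (volume.restrict (Ioo (0:ℝ) 1)))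
      = ENNReal.ofReal (∫ t in Ioo (0:ℝ) 1, F t * (2 * t)) := by
  have hSmeas : MeasurableSet {q : ℝ × ℝ | q.2 < F q.1} :=
    measurableSet_lt measurable_snd (hF.measurable.comp measurable_fst)
  have hfmeas : Measurable fun q : ℝ × ℝ => {q : ℝ × ℝ | q.2 < F q.1}.indicator
      (fun q => ENNReal.ofReal (2 * q.1)) q :=
    Measurable.indicator (by fun_prop) hSmeas
  rw [lintegral_prod _ hfmeas.aemeasurable]
  have hout : ∀ᵐ x ∂(volume.restrict (Ioo (0:ℝ) 1)),
      (∫⁻ y, {q : ℝ × ℝ | q.2 < F q.1}.indicator (fun q => ENNReal.ofReal (2 * q.1)) (x, y)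
        ∂(volume.restrict (Ioo (0:ℝ) 1))) = ENNReal.ofReal (F x * (2 * x)) := by
    filter_upwards [ae_restrict_mem measurableSet_Ioo] with x hx
    have h1 : ∀ y : ℝ, {q : ℝ × ℝ | q.2 < F q.1}.indicator
        (fun q => ENNReal.ofReal (2 * q.1)) (x, y)
        = (Iio (F x)).indicator (fun _ => ENNReal.ofReal (2 * x)) y := by
      intro y
      by_cases hy : y < F x <;> simp [Set.indicator, hy, Set.mem_setOf_eq]
    simp_rw [h1]
    rw [lintegral_indicator measurableSet_Iio, Measure.restrict_restrict measurableSet_Iio,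
      setLIntegral_const]
    have hset : Iio (F x) ∩ Ioo (0:ℝ) 1 = Ioo 0 (F x) := by
      ext y
      constructor
      · rintro ⟨h1, h2, h3⟩; exact ⟨h2, h1⟩
      · rintro ⟨h1, h2⟩; exact ⟨h2, h1, lt_of_lt_of_le h2 (hF1 x hx)⟩
    rw [hset, Real.volume_Ioo, sub_zero, ← ENNReal.ofReal_mul (by nlinarith [hx.1.le]),
      mul_comm]
  rw [lintegral_congr_ae hout]
  exact (ofReal_integral_eq_lintegral_ofReal (integ_aux hF hF0 hF1)
    (by filter_upwards [ae_restrict_mem measurableSet_Ioo] with t ht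
        simp only [Pi.zero_apply]
        nlinarith [hF0 t ht, ht.1.le])).symm

lemma piece_snd {G : ℝ → ℝ} (hG : Monotone G) (hG0 : ∀ t ∈ Ioo (0:ℝ) 1, 0 ≤ G t)
    (hG1 : ∀ t ∈ Ioo (0:ℝ) 1, G t ≤ 1) :
    ∫⁻ p, {q : ℝ × ℝ | q.1 < G q.2}.indicator (fun q => ENNReal.ofReal (2 * q.2)) p
        ∂((volume.restrict (Ioo (0:ℝ) 1)).prod (volume.restrict (Ioo (0:ℝ) 1)))
      = ENNReal.ofReal (∫ u in Ioo (0:ℝ) 1, G u * (2 * u)) := by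
  have hSmeas : MeasurableSet {q : ℝ × ℝ | q.1 < G q.2} :=
    measurableSet_lt measurable_fst (hG.measurable.comp measurable_snd)
  have hfmeas : Measurable fun q : ℝ × ℝ => {q : ℝ × ℝ | q.1 < G q.2}.indicator
      (fun q => ENNReal.ofReal (2 * q.2)) q :=
    Measurable.indicator (by fun_prop) hSmeas
  rw [lintegral_prod_symm _ hfmeas.aemeasurable]
  have hout : ∀ᵐ y ∂(volume.restrict (Ioo (0:ℝ) 1)),
      (∫⁻ x, {q : ℝ × ℝ | q.1 < G q.2}.indicator (fun q => ENNReal.ofReal (2 * q.2)) (x, y)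
        ∂(volume.restrict (Ioo (0:ℝ) 1))) = ENNReal.ofReal (G y * (2 * y)) := by
    filter_upwards [ae_restrict_mem measurableSet_Ioo] with y hy
    have h1 : ∀ x : ℝ, {q : ℝ × ℝ | q.1 < G q.2}.indicator
        (fun q => ENNReal.ofReal (2 * q.2)) (x, y)
        = (Iio (G y)).indicator (fun _ => ENNReal.ofReal (2 * y)) x := by
      intro x
      by_cases hx : x < G y <;> simp [Set.indicator, hx, Set.mem_setOf_eq]
    simp_rw [h1]
    rw [lintegral_indicator measurableSet_Iio, Measure.restrict_restrict measurableSet_Iio,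
      setLIntegral_const]
    have hset : Iio (G y) ∩ Ioo (0:ℝ) 1 = Ioo 0 (G y) := by
      ext x
      constructor
      · rintro ⟨h1, h2, h3⟩; exact ⟨h2, h1⟩
      · rintro ⟨h1, h2⟩; exact ⟨h2, h1, lt_of_lt_of_le h2 (hG1 y hy)⟩
    rw [hset, Real.volume_Ioo, sub_zero, ← ENNReal.ofReal_mul (by nlinarith [hy.1.le]),
      mul_comm]
  rw [lintegral_congr_ae hout]
  exact (ofReal_integral_eq_lintegral_ofReal (integ_aux hG hG0 hG1)
    (by filter_upwards [ae_restrict_mem measurableSet_Ioo] with t ht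
        simp only [Pi.zero_apply]
        nlinarith [hG0 t ht, ht.1.le])).symm

lemma piece_max :
    ∫⁻ p : ℝ × ℝ, ENNReal.ofReal (2 * max p.1 p.2)
        ∂((volume.restrict (Ioo (0:ℝ) 1)).prod (volume.restrict (Ioo (0:ℝ) 1)))
      = ENNReal.ofReal (4/3) := by
  have hmeas : Measurable fun p : ℝ × ℝ => ENNReal.ofReal (2 * max p.1 p.2) := by fun_prop
  rw [lintegral_prod _ hmeas.aemeasurable]
  have hout : ∀ᵐ x ∂(volume.restrict (Ioo (0:ℝ) 1)),
      (∫⁻ y, ENNReal.ofReal (2 * max x y) ∂(volume.restrict (Ioo (0:ℝ) 1)))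
        = ENNReal.ofReal (1 + x^2) := by
    filter_upwards [ae_restrict_mem measurableSet_Ioo] with x hx
    have hcont : Continuous fun y : ℝ => 2 * max x y :=
      continuous_const.mul (continuous_const.max continuous_id)
    have hint : ∫ y in Ioo (0:ℝ) 1, 2 * max x y = 1 + x^2 := by
      rw [← integral_Ioc_eq_integral_Ioo, ← intervalIntegral.integral_of_le zero_le_one,
        ← intervalIntegral.integral_add_adjacent_intervals
          (hcont.intervalIntegrable 0 x) (hcont.intervalIntegrable x 1)]
      have e1 : ∫ y in (0:ℝ)..x, 2 * max x y = 2 * x^2 := by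
        rw [intervalIntegral.integral_congr (g := fun _ => 2 * x)
          (fun y hy => by
            rw [uIcc_of_le hx.1.le] at hy
            simp [max_eq_left hy.2])]
        simp [intervalIntegral.integral_const]; ring
      have e2 : ∫ y in x..(1:ℝ), 2 * max x y = 1 - x^2 := by
        rw [intervalIntegral.integral_congr (g := fun y => 2 * y)
          (fun y hy => by
            rw [uIcc_of_le hx.2.le] at hy
            simp [max_eq_right hy.1])]
        rw [intervalIntegral.integral_const_mul, integral_id]; ring
      rw [e1, e2]; ring
    rw [← hint]
    exact (ofReal_integral_eq_lintegral_ofReal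
      ((hcont.integrableOn_Icc (a := 0) (b := 1)).mono_set Ioo_subset_Icc_self)
      (by filter_upwards [ae_restrict_mem measurableSet_Ioo] with y hy
          simp only [Pi.zero_apply]
          nlinarith [le_max_left x y, hy.1.le, le_max_right x y])).symm
  rw [lintegral_congr_ae hout]
  have : ∫ x in Ioo (0:ℝ) 1, (1 + x^2) = 4/3 := by
    rw [← integral_Ioc_eq_integral_Ioo, ← intervalIntegral.integral_of_le zero_le_one]
    rw [intervalIntegral.integral_add (intervalIntegrable_const (c := (1:ℝ)))
      ((continuous_pow 2).intervalIntegrable 0 1), integral_pow]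
    simp
    norm_num
  rw [← this]
  exact (ofReal_integral_eq_lintegral_ofReal
    (((continuous_const.add (continuous_pow 2)).integrableOn_Icc (a := 0) (b := 1)).mono_set
      Ioo_subset_Icc_self)
    (by filter_upwards [ae_restrict_mem measurableSet_Ioo] with y hy
        simp only [Pi.zero_apply, Pi.add_apply]
        nlinarith [sq_nonneg y])).symm

lemma null_slice_fst {F : ℝ → ℝ} (hF : Monotone F) (hF1 : ∀ t ∈ Ioo (0:ℝ) 1, F t ≤ 1)
    (hnull : ((volume.restrict (Ioo (0:ℝ) 1)).prod (volume.restrict (Ioo (0:ℝ) 1)))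
      {q : ℝ × ℝ | q.1 < q.2 ∧ q.2 < F q.1} = 0) :
    ∀ᵐ t ∂(volume.restrict (Ioo (0:ℝ) 1)), F t ≤ t := by
  have hSmeas : MeasurableSet {q : ℝ × ℝ | q.1 < q.2 ∧ q.2 < F q.1} :=
    (measurableSet_lt measurable_fst measurable_snd).inter
      (measurableSet_lt measurable_snd (hF.measurable.comp measurable_fst))
  rw [Measure.prod_apply hSmeas] at hnull
  have hae := (lintegral_eq_zero_iff (Measurable.comp (measurable_measure_prodMk_left hSmeas) measurable_id)).mp hnull
  filter_upwards [hae, ae_restrict_mem measurableSet_Ioo] with t h0 ht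
  by_contra hlt
  push_neg at hlt
  simp only [Function.comp_apply, id_eq, Pi.zero_apply] at h0
  have hsec : Prod.mk t ⁻¹' {q : ℝ × ℝ | q.1 < q.2 ∧ q.2 < F q.1} = Ioo t (F t) := rfl
  rw [hsec] at h0
  rw [Measure.restrict_apply' measurableSet_Ioo] at h0
  have hsub : Ioo t (F t) ∩ Ioo 0 1 = Ioo t (F t) := by
    apply inter_eq_self_of_subset_left
    intro y hy
    exact ⟨lt_trans ht.1 hy.1, lt_of_lt_of_le hy.2 (hF1 t ht)⟩
  rw [hsub, Real.volume_Ioo, ENNReal.ofReal_eq_zero] at h0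
  linarith

lemma null_slice_snd {G : ℝ → ℝ} (hG : Monotone G) (hG1 : ∀ t ∈ Ioo (0:ℝ) 1, G t ≤ 1)
    (hnull : ((volume.restrict (Ioo (0:ℝ) 1)).prod (volume.restrict (Ioo (0:ℝ) 1)))
      {q : ℝ × ℝ | q.2 < q.1 ∧ q.1 < G q.2} = 0) :
    ∀ᵐ u ∂(volume.restrict (Ioo (0:ℝ) 1)), G u ≤ u := by
  have hSmeas : MeasurableSet {q : ℝ × ℝ | q.2 < q.1 ∧ q.1 < G q.2} :=
    (measurableSet_lt measurable_snd measurable_fst).inter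
      (measurableSet_lt measurable_fst (hG.measurable.comp measurable_snd))
  rw [Measure.prod_apply_symm hSmeas] at hnull
  have hae := (lintegral_eq_zero_iff
    (Measurable.comp (measurable_measure_prodMk_right hSmeas) measurable_id)).mp hnull
  filter_upwards [hae, ae_restrict_mem measurableSet_Ioo] with u h0 hu
  by_contra hlt
  push_neg at hlt
  simp only [Function.comp_apply, id_eq, Pi.zero_apply] at h0
  have hsec : (fun x => (x, u)) ⁻¹' {q : ℝ × ℝ | q.2 < q.1 ∧ q.1 < G q.2} = Ioo u (G u) := rfl
  rw [hsec] at h0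
  rw [Measure.restrict_apply' measurableSet_Ioo] at h0
  have hsub : Ioo u (G u) ∩ Ioo 0 1 = Ioo u (G u) := by
    apply inter_eq_self_of_subset_left
    intro y hy
    exact ⟨lt_trans hu.1 hy.1, lt_of_lt_of_le hy.2 (hG1 u hu)⟩
  rw [hsub, Real.volume_Ioo, ENNReal.ofReal_eq_zero] at h0
  linarith

lemma key_lemma {F G : ℝ → ℝ} (hF : Monotone F) (hG : Monotone G)
    (hF0 : ∀ t ∈ Ioo (0:ℝ) 1, 0 ≤ F t) (hF1 : ∀ t ∈ Ioo (0:ℝ) 1, F t ≤ 1)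
    (hG0 : ∀ t ∈ Ioo (0:ℝ) 1, 0 ≤ G t) (hG1 : ∀ t ∈ Ioo (0:ℝ) 1, G t ≤ 1)
    (hdisj : ∀ t ∈ Ioo (0:ℝ) 1, ∀ u ∈ Ioo (0:ℝ) 1, u < F t → ¬ t < G u) :
    (∫ t in Ioo (0:ℝ) 1, F t * (2*t)) + (∫ u in Ioo (0:ℝ) 1, G u * (2*u)) ≤ 4/3 ∧
      ((∫ t in Ioo (0:ℝ) 1, F t * (2*t)) + (∫ u in Ioo (0:ℝ) 1, G u * (2*u)) = 4/3 →
        (∀ᵐ t ∂(volume.restrict (Ioo (0:ℝ) 1)), F t ≤ t) ∧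
        (∀ᵐ u ∂(volume.restrict (Ioo (0:ℝ) 1)), G u ≤ u)) := by
  set μ2 := (volume.restrict (Ioo (0:ℝ) 1)).prod (volume.restrict (Ioo (0:ℝ) 1)) with hμ2
  set fA : ℝ × ℝ → ENNReal := fun q =>
    {q : ℝ × ℝ | q.2 < F q.1}.indicator (fun q => ENNReal.ofReal (2 * q.1)) q with hfA
  set fB : ℝ × ℝ → ENNReal := fun q =>
    {q : ℝ × ℝ | q.1 < G q.2}.indicator (fun q => ENNReal.ofReal (2 * q.2)) q with hfB
  set fM : ℝ × ℝ → ENNReal := fun q => ENNReal.ofReal (2 * max q.1 q.2) with hfM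
  have hSA : MeasurableSet {q : ℝ × ℝ | q.2 < F q.1} :=
    measurableSet_lt measurable_snd (hF.measurable.comp measurable_fst)
  have hSB : MeasurableSet {q : ℝ × ℝ | q.1 < G q.2} :=
    measurableSet_lt measurable_fst (hG.measurable.comp measurable_snd)
  have hfA_meas : Measurable fA := Measurable.indicator (by fun_prop) hSA
  have hfB_meas : Measurable fB := Measurable.indicator (by fun_prop) hSB
  have hfM_meas : Measurable fM := by fun_prop
  have hsq_ae : ∀ᵐ p ∂μ2, p ∈ (Ioo (0:ℝ) 1) ×ˢ (Ioo (0:ℝ) 1) := by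
    rw [hμ2, Measure.prod_restrict]
    exact ae_restrict_mem (measurableSet_Ioo.prod measurableSet_Ioo)
  have hK1 : 0 ≤ ∫ t in Ioo (0:ℝ) 1, F t * (2*t) :=
    setIntegral_nonneg measurableSet_Ioo (fun t ht => by nlinarith [hF0 t ht, ht.1.le])
  have hK2 : 0 ≤ ∫ u in Ioo (0:ℝ) 1, G u * (2*u) :=
    setIntegral_nonneg measurableSet_Ioo (fun t ht => by nlinarith [hG0 t ht, ht.1.le])
  have hle : ∀ᵐ p ∂μ2, fA p + fB p ≤ fM p := by
    filter_upwards [hsq_ae] with p hp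
    obtain ⟨hp1, hp2⟩ := hp
    by_cases hA : p.2 < F p.1
    · have hBz : fB p = 0 := indicator_of_notMem (s := {q : ℝ × ℝ | q.1 < G q.2}) (a := p)
        (hdisj _ hp1 _ hp2 hA) _
      rw [hfA]
      simp only [indicator_of_mem (show p ∈ {q : ℝ × ℝ | q.2 < F q.1} from hA)]
      rw [hBz, add_zero]
      exact ENNReal.ofReal_le_ofReal
        (mul_le_mul_of_nonneg_left (le_max_left _ _) (by norm_num))
    · have hAz : fA p = 0 := indicator_of_notMem (s := {q : ℝ × ℝ | q.2 < F q.1}) (a := p) hA _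
      rw [hAz, zero_add]
      calc fB p ≤ ENNReal.ofReal (2 * p.2) := indicator_apply_le (fun _ => le_rfl)
      _ ≤ fM p := ENNReal.ofReal_le_ofReal
            (mul_le_mul_of_nonneg_left (le_max_right _ _) (by norm_num))
  have hsum_eq : ∫⁻ p, (fA p + fB p) ∂μ2
      = ENNReal.ofReal ((∫ t in Ioo (0:ℝ) 1, F t * (2*t)) + ∫ u in Ioo (0:ℝ) 1, G u * (2*u)) := by
    rw [lintegral_add_left hfA_meas, hμ2, hfA, hfB, piece_fst hF hF0 hF1, piece_snd hG hG0 hG1,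
      ENNReal.ofReal_add hK1 hK2]
  have hM_eq : ∫⁻ p, fM p ∂μ2 = ENNReal.ofReal (4/3) := piece_max
  have hineq : (∫ t in Ioo (0:ℝ) 1, F t * (2*t)) + (∫ u in Ioo (0:ℝ) 1, G u * (2*u)) ≤ 4/3 := by
    have h := lintegral_mono_ae hle
    rw [hsum_eq, hM_eq] at h
    exact (ENNReal.ofReal_le_ofReal_iff (by norm_num)).mp h
  refine ⟨hineq, fun heq => ?_⟩
  -- equality case
  have hEq : ∫⁻ p, (fA p + fB p) ∂μ2 = ∫⁻ p, fM p ∂μ2 := by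
    rw [hsum_eq, hM_eq, heq]
  have hfin : ∫⁻ p, (fA p + fB p) ∂μ2 ≠ ⊤ := by
    rw [hsum_eq]; exact ENNReal.ofReal_ne_top
  have hzero : ∫⁻ p, (fM p - (fA p + fB p)) ∂μ2 = 0 := by
    rw [lintegral_sub (f := fM) (g := fun p => fA p + fB p) (hfA_meas.add hfB_meas) hfin hle, hEq, tsub_self]
  have haeeq : ∀ᵐ p ∂μ2, fA p + fB p = fM p := by
    have h := (lintegral_eq_zero_iff (hfM_meas.sub (hfA_meas.add hfB_meas))).mp hzero
    filter_upwards [h, hle] with p hp hlep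
    simp only [Pi.zero_apply] at hp
    exact le_antisymm hlep (tsub_eq_zero_iff_le.mp hp)
  have hbad : μ2 {p : ℝ × ℝ | ¬ (fA p + fB p = fM p)} = 0 := ae_iff.mp haeeq
  have hnsq : μ2 (((Ioo (0:ℝ) 1) ×ˢ (Ioo (0:ℝ) 1))ᶜ) = 0 := by
    rw [hμ2, Measure.prod_restrict, Measure.restrict_apply (measurableSet_Ioo.prod measurableSet_Ioo).compl]
    simp
  constructor
  · apply null_slice_fst hF hF1
    refine measure_mono_null (fun p hp => ?_) (measure_union_null hbad hnsq)
    · 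
      by_cases hpsq : p ∈ (Ioo (0:ℝ) 1) ×ˢ (Ioo (0:ℝ) 1)
      · left
        obtain ⟨hlt12, hltF⟩ := hp
        obtain ⟨hp1, hp2⟩ := hpsq
        have h1 : fA p = ENNReal.ofReal (2 * p.1) :=
          indicator_of_mem (show p ∈ {q : ℝ × ℝ | q.2 < F q.1} from hltF) _
        have h2 : fB p = 0 := indicator_of_notMem (s := {q : ℝ × ℝ | q.1 < G q.2}) (a := p)
          (hdisj _ hp1 _ hp2 hltF) _
        have h3 : fM p = ENNReal.ofReal (2 * p.2) := by
          rw [hfM]; simp only [max_eq_right hlt12.le]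
        simp only [mem_setOf_eq, h1, h2, h3, add_zero]
        intro hcon
        rw [ENNReal.ofReal_eq_ofReal_iff (by nlinarith [hp1.1]) (by nlinarith [hp2.1])] at hcon
        linarith
      · right; exact hpsq
  · apply null_slice_snd hG hG1
    refine measure_mono_null (fun p hp => ?_) (measure_union_null hbad hnsq)
    · 
      by_cases hpsq : p ∈ (Ioo (0:ℝ) 1) ×ˢ (Ioo (0:ℝ) 1)
      · left
        obtain ⟨hlt21, hltG⟩ := hp
        obtain ⟨hp1, hp2⟩ := hpsq
        have h2 : fB p = ENNReal.ofReal (2 * p.2) :=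
          indicator_of_mem (show p ∈ {q : ℝ × ℝ | q.1 < G q.2} from hltG) _
        have h1 : fA p = 0 := indicator_of_notMem (s := {q : ℝ × ℝ | q.2 < F q.1}) (a := p)
          (fun hmem => (hdisj _ hp1 _ hp2 hmem) hltG) _
        have h3 : fM p = ENNReal.ofReal (2 * p.1) := by
          rw [hfM]; simp only [max_eq_left hlt21.le]
        simp only [mem_setOf_eq, h1, h2, h3, zero_add]
        intro hcon
        rw [ENNReal.ofReal_eq_ofReal_iff (by nlinarith [hp2.1]) (by nlinarith [hp1.1])] at hcon
        linarith
      · right; exact hpsq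

/-- If `X` has distribution function `F` (a CDF on `[0,1]`) and `Y` has distribution
function the right-continuous inverse `F⁻¹`, then `E[X²] + E[Y²] ≥ 2/3`, with equality
iff `F` is the identity on `[0,1]`. -/
theorem stmt_0
    {Ω : Type*} [MeasurableSpace Ω] (ℙ : Measure Ω) [IsProbabilityMeasure ℙ]
    (F : ℝ → ℝ) (hFmono : MonotoneOn F (Icc 0 1))
    (hFrc : ∀ x ∈ Ico (0:ℝ) 1, ContinuousWithinAt F (Ici x) x)
    (hF0 : ∀ x ∈ Icc (0:ℝ) 1, 0 ≤ F x) (hF1 : F 1 = 1)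
    (Finv : ℝ → ℝ)
    (hFinv : ∀ x ∈ Icc (0:ℝ) 1, Finv x = sSup {s | s ∈ Icc (0:ℝ) 1 ∧ F s ≤ x})
    (X Y : Ω → ℝ) (hX : Measurable X) (hY : Measurable Y)
    (hXr : ∀ᵐ ω ∂ℙ, X ω ∈ Icc (0:ℝ) 1) (hYr : ∀ᵐ ω ∂ℙ, Y ω ∈ Icc (0:ℝ) 1)
    (hXd : ∀ x ∈ Icc (0:ℝ) 1, (ℙ {ω | X ω ≤ x}).toReal = F x)
    (hYd : ∀ x ∈ Icc (0:ℝ) 1, (ℙ {ω | Y ω ≤ x}).toReal = Finv x) :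
    (2/3 : ℝ) ≤ (∫ ω, (X ω)^2 ∂ℙ) + ∫ ω, (Y ω)^2 ∂ℙ ∧
      ((∫ ω, (X ω)^2 ∂ℙ) + (∫ ω, (Y ω)^2 ∂ℙ) = 2/3 ↔
        ∀ x ∈ Icc (0:ℝ) 1, F x = x) := by
  -- clamping
  set cl : ℝ → ℝ := fun x => max 0 (min x 1) with hcl
  have hclmem : ∀ x, cl x ∈ Icc (0:ℝ) 1 := fun x =>
    ⟨le_max_left _ _, max_le zero_le_one (min_le_right _ _)⟩
  have hclid : ∀ x ∈ Icc (0:ℝ) 1, cl x = x := fun x hx => by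
    rw [hcl]; simp only [min_eq_left hx.2, max_eq_right hx.1]
  have hclmono : Monotone cl := fun a b hab =>
    max_le_max le_rfl (min_le_min hab le_rfl)
  have hF_le1 : ∀ x ∈ Icc (0:ℝ) 1, F x ≤ 1 := fun x hx =>
    hF1 ▸ hFmono hx (right_mem_Icc.mpr zero_le_one) hx.2
  -- Finv basics
  have hFinv_mem : ∀ y ∈ Icc (0:ℝ) 1, Finv y ∈ Icc (0:ℝ) 1 := by
    intro y hy
    rw [hFinv y hy]
    rcases eq_empty_or_nonempty {s | s ∈ Icc (0:ℝ) 1 ∧ F s ≤ y} with he | hne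
    · rw [he, Real.sSup_empty]; exact ⟨le_rfl, zero_le_one⟩
    · constructor
      · obtain ⟨s, hs⟩ := hne
        exact le_trans hs.1.1 (le_csSup ⟨1, fun z hz => hz.1.2⟩ hs)
      · exact csSup_le hne (fun z hz => hz.1.2)
  have dual_ub : ∀ x ∈ Icc (0:ℝ) 1, ∀ y ∈ Icc (0:ℝ) 1, F x ≤ y → x ≤ Finv y := by
    intro x hx y hy hxy
    rw [hFinv y hy]
    exact le_csSup ⟨1, fun z hz => hz.1.2⟩ ⟨hx, hxy⟩
  have dual_lb : ∀ y ∈ Icc (0:ℝ) 1, ∀ x, 0 ≤ x → x < Finv y → F x ≤ y := by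
    intro y hy x hx hlt
    rw [hFinv y hy] at hlt
    rcases eq_empty_or_nonempty {s | s ∈ Icc (0:ℝ) 1 ∧ F s ≤ y} with he | hne
    · rw [he, Real.sSup_empty] at hlt; linarith
    · obtain ⟨s, hs, hxs⟩ := exists_lt_of_lt_csSup hne hlt
      exact le_trans (hFmono ⟨hx, le_trans hxs.le hs.1.2⟩ hs.1 hxs.le) hs.2
  -- clamped versions
  set Fc : ℝ → ℝ := fun x => F (cl x) with hFc
  set Gc : ℝ → ℝ := fun x => Finv (cl x) with hGc
  have hFcmono : Monotone Fc := fun a b hab => hFmono (hclmem a) (hclmem b) (hclmono hab)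
  have hGcmono : Monotone Gc := by
    intro a b hab
    rw [hGc]
    simp only
    rw [hFinv _ (hclmem a), hFinv _ (hclmem b)]
    rcases eq_empty_or_nonempty {s | s ∈ Icc (0:ℝ) 1 ∧ F s ≤ cl a} with he | hne
    · rw [he, Real.sSup_empty]
      rcases eq_empty_or_nonempty {s | s ∈ Icc (0:ℝ) 1 ∧ F s ≤ cl b} with he2 | hne2
      · rw [he2, Real.sSup_empty]
      · obtain ⟨s, hs⟩ := hne2
        exact le_trans hs.1.1 (le_csSup ⟨1, fun z hz => hz.1.2⟩ hs)
    · apply csSup_le_csSup ⟨1, fun z hz => hz.1.2⟩ hne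
      intro z hz
      exact ⟨hz.1, le_trans hz.2 (hclmono hab)⟩
  have hFc_eq : ∀ t ∈ Ioo (0:ℝ) 1, Fc t = F t := fun t ht => by
    rw [hFc]; simp only; rw [hclid t (mem_Icc_of_Ioo ht)]
  have hGc_eq : ∀ t ∈ Ioo (0:ℝ) 1, Gc t = Finv t := fun t ht => by
    rw [hGc]; simp only; rw [hclid t (mem_Icc_of_Ioo ht)]
  have hFc0 : ∀ t ∈ Ioo (0:ℝ) 1, 0 ≤ Fc t := fun t ht => hF0 _ (hclmem t)
  have hFc1 : ∀ t ∈ Ioo (0:ℝ) 1, Fc t ≤ 1 := fun t ht => hF_le1 _ (hclmem t)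
  have hGc0 : ∀ t ∈ Ioo (0:ℝ) 1, 0 ≤ Gc t := fun t ht => (hFinv_mem _ (hclmem t)).1
  have hGc1 : ∀ t ∈ Ioo (0:ℝ) 1, Gc t ≤ 1 := fun t ht => (hFinv_mem _ (hclmem t)).2
  have hdisj : ∀ t ∈ Ioo (0:ℝ) 1, ∀ u ∈ Ioo (0:ℝ) 1, u < Fc t → ¬ t < Gc u := by
    intro t ht u hu huF htG
    rw [hFc_eq t ht] at huF
    rw [hGc_eq u hu] at htG
    exact absurd (dual_lb u (mem_Icc_of_Ioo hu) t ht.1.le htG) (not_le.mpr huF)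
  -- expectation formulas
  have int_2t : Integrable (fun t : ℝ => 2*t) (volume.restrict (Ioo (0:ℝ) 1)) :=
    ((continuous_const.mul continuous_id).integrableOn_Icc (a := 0) (b := 1)).mono_set
      Ioo_subset_Icc_self
  have h2t : ∫ t in Ioo (0:ℝ) 1, 2*t = 1 := by
    rw [← integral_Ioc_eq_integral_Ioo, ← intervalIntegral.integral_of_le zero_le_one,
      intervalIntegral.integral_const_mul, integral_id]
    norm_num
  have hEX : ∫ ω, (X ω)^2 ∂ℙ = 1 - ∫ t in Ioo (0:ℝ) 1, Fc t * (2*t) := by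
    rw [sq_layercake ℙ X hX hXr F hXd]
    rw [show ∫ t in Ioo (0:ℝ) 1, (1 - F t) * (2*t)
        = (∫ t in Ioo (0:ℝ) 1, 2*t) - ∫ t in Ioo (0:ℝ) 1, Fc t * (2*t) from ?_, h2t]
    rw [← integral_sub int_2t (integ_aux hFcmono hFc0 hFc1)]
    apply setIntegral_congr_fun measurableSet_Ioo
    intro t ht
    simp only
    rw [hFc_eq t ht]
    ring
  have hEY : ∫ ω, (Y ω)^2 ∂ℙ = 1 - ∫ t in Ioo (0:ℝ) 1, Gc t * (2*t) := by
    rw [sq_layercake ℙ Y hY hYr Finv hYd]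
    rw [show ∫ t in Ioo (0:ℝ) 1, (1 - Finv t) * (2*t)
        = (∫ t in Ioo (0:ℝ) 1, 2*t) - ∫ t in Ioo (0:ℝ) 1, Gc t * (2*t) from ?_, h2t]
    rw [← integral_sub int_2t (integ_aux hGcmono hGc0 hGc1)]
    apply setIntegral_congr_fun measurableSet_Ioo
    intro t ht
    simp only
    rw [hGc_eq t ht]
    ring
  obtain ⟨hineq, hext⟩ := key_lemma hFcmono hGcmono hFc0 hFc1 hGc0 hGc1 hdisj
  constructor
  · rw [hEX, hEY]; linarith
  constructor
  · -- equality implies F = id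
    intro heq
    rw [hEX, hEY] at heq
    obtain ⟨haeF, haeG⟩ := hext (by linarith)
    have hFcm : Measurable Fc := hFcmono.measurable
    have hGcm : Measurable Gc := hGcmono.measurable
    have hnF : volume {t | ¬ (t ∈ Ioo (0:ℝ) 1 → Fc t ≤ t)} = 0 := by
      rw [ae_restrict_iff' measurableSet_Ioo] at haeF
      exact ae_iff.mp haeF
    have hnG : volume {t | ¬ (t ∈ Ioo (0:ℝ) 1 → Gc t ≤ t)} = 0 := by
      rw [ae_restrict_iff' measurableSet_Ioo] at haeG
      exact ae_iff.mp haeG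
    -- F u ≤ u on Ioo 0 1
    have hC2 : ∀ u ∈ Ioo (0:ℝ) 1, F u ≤ u := by
      intro u hu
      by_contra hlt
      push_neg at hlt
      set J := Ioo u (min (F u) 1) with hJ
      have hJpos : volume J ≠ 0 := by
        rw [hJ, Real.volume_Ioo]
        simp only [ne_eq, ENNReal.ofReal_eq_zero, not_le, sub_pos]
        exact lt_min hlt hu.2
      have : (J \ {t | ¬ (t ∈ Ioo (0:ℝ) 1 → Fc t ≤ t)}).Nonempty := by
        apply nonempty_of_measure_ne_zero
        rw [measure_diff_null hnF]
        exact hJpos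
      obtain ⟨t, htJ, htn⟩ := this
      simp only [mem_setOf_eq, not_not] at htn
      have htI : t ∈ Ioo (0:ℝ) 1 := ⟨lt_trans hu.1 htJ.1, lt_of_lt_of_le htJ.2 (min_le_right _ _)⟩
      have hFt := htn htI
      rw [hFc_eq t htI] at hFt
      have : F u ≤ F t := hFmono (mem_Icc_of_Ioo hu) (mem_Icc_of_Ioo htI) htJ.1.le
      have : F u ≤ t := le_trans this hFt
      have : F u < F u := lt_of_le_of_lt this (lt_of_lt_of_le htJ.2 (min_le_left _ _))
      exact lt_irrefl _ this
    -- u ≤ F u on Ioo 0 1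
    have hC1 : ∀ u ∈ Ioo (0:ℝ) 1, u ≤ F u := by
      intro u hu
      by_contra hlt
      push_neg at hlt
      set J := Ioo (max (F u) 0) u with hJ
      have hJpos : volume J ≠ 0 := by
        rw [hJ, Real.volume_Ioo]
        simp only [ne_eq, ENNReal.ofReal_eq_zero, not_le, sub_pos]
        exact max_lt hlt hu.1
      have : (J \ {t | ¬ (t ∈ Ioo (0:ℝ) 1 → Gc t ≤ t)}).Nonempty := by
        apply nonempty_of_measure_ne_zero
        rw [measure_diff_null hnG]
        exact hJpos
      obtain ⟨t, htJ, htn⟩ := this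
      simp only [mem_setOf_eq, not_not] at htn
      have htI : t ∈ Ioo (0:ℝ) 1 :=
        ⟨lt_of_le_of_lt (le_max_right _ _) htJ.1, lt_trans htJ.2 hu.2⟩
      have hGt := htn htI
      rw [hGc_eq t htI] at hGt
      have hFut : F u ≤ t := le_of_lt (lt_of_le_of_lt (le_max_left _ _) htJ.1)
      have : u ≤ Finv t := dual_ub u (mem_Icc_of_Ioo hu) t (mem_Icc_of_Ioo htI) hFut
      linarith [htJ.2]
    intro x hx
    rcases eq_or_lt_of_le hx.1 with h0 | h0
    · -- x = 0
      rw [← h0]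
      refine le_antisymm ?_ (hF0 0 (left_mem_Icc.mpr zero_le_one))
      by_contra hpos
      push_neg at hpos
      set t := min (F 0) 1 / 2 with ht
      have htI : t ∈ Ioo (0:ℝ) 1 := by
        constructor
        · rw [ht]; positivity
        · rw [ht]
          have := min_le_right (F 0) 1
          linarith
      have h1 : F 0 ≤ F t := hFmono (left_mem_Icc.mpr zero_le_one) (mem_Icc_of_Ioo htI) htI.1.le
      have h2 : F t ≤ t := hC2 t htI
      have h3 : t < min (F 0) 1 := by
        rw [ht]
        apply div_lt_self ?_ one_lt_two
        exact lt_min hpos zero_lt_one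
      have := lt_of_le_of_lt (le_trans h1 h2) (lt_of_lt_of_le h3 (min_le_left _ _))
      exact lt_irrefl _ this
    rcases eq_or_lt_of_le hx.2 with h1 | h1
    · rw [h1, hF1]
    · exact le_antisymm (hC2 x ⟨h0, h1⟩) (hC1 x ⟨h0, h1⟩)
  · -- F = id implies equality
    intro hid
    have hFinv_id : ∀ y ∈ Icc (0:ℝ) 1, Finv y = y := by
      intro y hy
      rw [hFinv y hy]
      have : {s | s ∈ Icc (0:ℝ) 1 ∧ F s ≤ y} = Icc 0 y := by
        ext s
        constructor
        · rintro ⟨hs, hFs⟩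
          rw [hid s hs] at hFs
          exact ⟨hs.1, hFs⟩
        · rintro ⟨h1, h2⟩
          have hs : s ∈ Icc (0:ℝ) 1 := ⟨h1, le_trans h2 hy.2⟩
          rw [mem_setOf_eq, hid s hs]
          exact ⟨hs, h2⟩
      rw [this, csSup_Icc hy.1]
    have hK1 : ∫ t in Ioo (0:ℝ) 1, Fc t * (2*t) = 2/3 := by
      rw [show ∫ t in Ioo (0:ℝ) 1, Fc t * (2*t) = ∫ t in Ioo (0:ℝ) 1, t * (2*t) from
        setIntegral_congr_fun measurableSet_Ioo (fun t ht => by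
          rw [hFc_eq t ht, hid t (mem_Icc_of_Ioo ht)])]
      rw [← integral_Ioc_eq_integral_Ioo, ← intervalIntegral.integral_of_le zero_le_one]
      have : ∀ t : ℝ, t * (2*t) = 2 * t^2 := fun t => by ring
      simp_rw [this]
      rw [intervalIntegral.integral_const_mul, integral_pow]
      norm_num
    have hK2 : ∫ t in Ioo (0:ℝ) 1, Gc t * (2*t) = 2/3 := by
      rw [show ∫ t in Ioo (0:ℝ) 1, Gc t * (2*t) = ∫ t in Ioo (0:ℝ) 1, t * (2*t) from
        setIntegral_congr_fun measurableSet_Ioo (fun t ht => by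
          rw [hGc_eq t ht, hFinv_id t (mem_Icc_of_Ioo ht)])]
      rw [← integral_Ioc_eq_integral_Ioo, ← intervalIntegral.integral_of_le zero_le_one]
      have : ∀ t : ℝ, t * (2*t) = 2 * t^2 := fun t => by ring
      simp_rw [this]
      rw [intervalIntegral.integral_const_mul, integral_pow]
      norm_num
    rw [hEX, hEY, hK1, hK2]
    norm_num
end

section
/- For any CDF F of a probability measure on [0,1], if X has distribution F and Y has distribution the right-continuous inverse F⁻¹, then E[X²] + E[Y²] = ∫₀¹ (F(x) − x)² dx + 2/3. -/
/-!
Both second moments are tail integrals: `E[Z²] = ∫₀¹ 2x P(Z > x) dx` for `Z ∈ [0,1]` (Fubini).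
For `X` this gives `∫₀¹ 2x (1 - F x) dx`. For `Y` it gives `∫₀¹ 2u (1 - F⁻¹ u) du`, and since
`{s ∈ (0,1] | u < F s}` is the interval from `F⁻¹ u` to `1` up to an endpoint, this is the same
tail formula for `F` itself under Lebesgue measure on `(0,1]`, i.e. `∫₀¹ F²`. Finally
`2x (1 - F) + F² = (F - x)² + 2x - x²` and `∫₀¹ (2x - x²) dx = 2/3`.
-/

open MeasureTheory Set

lemma setIntegral_Ioc_indicator_Iio_two_mul {z : ℝ} (hz : z ∈ Icc (0:ℝ) 1) :
    ∫ x in Ioc (0:ℝ) 1, (Iio z).indicator (fun x => 2 * x) x = z ^ 2 := by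
  have hset : Iio z ∩ Ioc (0:ℝ) 1 = Ioo 0 z := by
    ext x
    simp only [mem_inter_iff, mem_Iio, mem_Ioc, mem_Ioo]
    constructor
    · rintro ⟨hxz, hx0, -⟩
      exact ⟨hx0, hxz⟩
    · rintro ⟨hx0, hxz⟩
      exact ⟨hxz, hx0, hxz.le.trans hz.2⟩
  rw [integral_indicator measurableSet_Iio, Measure.restrict_restrict measurableSet_Iio, hset,
    ← integral_Ioc_eq_integral_Ioo, ← intervalIntegral.integral_of_le hz.1,
    intervalIntegral.integral_const_mul, integral_id]
  ring

lemma measureReal_lt_eq_one_sub {α : Type*} [MeasurableSpace α] {μ : Measure α}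
    [IsProbabilityMeasure μ] {Z : α → ℝ} (hZ : Measurable Z) (x : ℝ) :
    μ.real {ω | x < Z ω} = 1 - μ.real {ω | Z ω ≤ x} := by
  rw [← probReal_compl_eq_one_sub (measurableSet_le hZ measurable_const)]
  congr with ω
  simp

section LayerCake

variable {α : Type*} [MeasurableSpace α] {μ : Measure α} [IsFiniteMeasure μ] {Z : α → ℝ}

lemma integral_sq_eq_setIntegral_measureReal_lt_of_measurable (hZ : Measurable Z)
    (hZ01 : ∀ᵐ ω ∂μ, Z ω ∈ Icc (0:ℝ) 1) :
    ∫ ω, Z ω ^ 2 ∂μ = ∫ x in Ioc (0:ℝ) 1, μ.real {ω | x < Z ω} * (2 * x) := by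
  set f : α × ℝ → ℝ := {q | q.2 < Z q.1}.indicator (fun q => 2 * q.2)
  have hf : Integrable f (μ.prod (volume.restrict (Ioc 0 1))) :=
    (((continuous_const.mul continuous_id).integrableOn_Ioc).comp_snd μ).indicator
      (measurableSet_lt measurable_snd (hZ.comp measurable_fst))
  have hsection_ω : ∀ ω, Z ω ∈ Icc (0:ℝ) 1 → ∫ x in Ioc (0:ℝ) 1, f (ω, x) = Z ω ^ 2 :=
    fun ω hω => setIntegral_Ioc_indicator_Iio_two_mul hω
  have hsection_x : ∀ x : ℝ, ∫ ω, f (ω, x) ∂μ = μ.real {ω | x < Z ω} * (2 * x) := fun x =>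
    integral_indicator_const (2 * x) (measurableSet_lt measurable_const hZ)
  calc ∫ ω, Z ω ^ 2 ∂μ = ∫ ω, (∫ x in Ioc (0:ℝ) 1, f (ω, x)) ∂μ :=
        integral_congr_ae (hZ01.mono fun ω hω => (hsection_ω ω hω).symm)
    _ = ∫ x in Ioc (0:ℝ) 1, ∫ ω, f (ω, x) ∂μ := integral_integral_swap (f := fun ω x => f (ω, x)) hf
    _ = ∫ x in Ioc (0:ℝ) 1, μ.real {ω | x < Z ω} * (2 * x) := by simp_rw [hsection_x]

lemma integral_sq_eq_setIntegral_measureReal_lt (hZ : AEMeasurable Z μ)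
    (hZ01 : ∀ᵐ ω ∂μ, Z ω ∈ Icc (0:ℝ) 1) :
    ∫ ω, Z ω ^ 2 ∂μ = ∫ x in Ioc (0:ℝ) 1, μ.real {ω | x < Z ω} * (2 * x) := by
  have hmk := hZ.ae_eq_mk
  have hmk01 : ∀ᵐ ω ∂μ, hZ.mk Z ω ∈ Icc (0:ℝ) 1 := by
    filter_upwards [hZ01, hmk] with ω hω h
    rwa [← h]
  have htail : ∀ x : ℝ, μ.real {ω | x < Z ω} = μ.real {ω | x < hZ.mk Z ω} := fun x =>
    measureReal_congr (hmk.mono fun ω h => show (x < Z ω) = (x < hZ.mk Z ω) by rw [h])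
  have hsq : ∫ ω, Z ω ^ 2 ∂μ = ∫ ω, hZ.mk Z ω ^ 2 ∂μ := integral_congr_ae (hmk.fun_comp (· ^ 2))
  rw [hsq, integral_sq_eq_setIntegral_measureReal_lt_of_measurable hZ.measurable_mk hmk01]
  simp_rw [htail]

end LayerCake

section Quantile

variable {F : ℝ → ℝ}

lemma sSup_sublevel_mem_Icc (u : ℝ) : sSup {s | s ∈ Icc (0:ℝ) 1 ∧ F s ≤ u} ∈ Icc (0:ℝ) 1 :=
  ⟨Real.sSup_nonneg fun _ ht => ht.1.1, Real.sSup_le (fun _ ht => ht.1.2) zero_le_one⟩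

lemma MonotoneOn.volume_superlevel_inter_Ioc (hF : MonotoneOn F (Icc 0 1)) (u : ℝ) :
    volume ({s | u < F s} ∩ Ioc (0:ℝ) 1)
      = ENNReal.ofReal (1 - sSup {s | s ∈ Icc (0:ℝ) 1 ∧ F s ≤ u}) := by
  set c := sSup {s | s ∈ Icc (0:ℝ) 1 ∧ F s ≤ u}
  have hc := sSup_sublevel_mem_Icc (F := F) u
  have hbdd : BddAbove {s | s ∈ Icc (0:ℝ) 1 ∧ F s ≤ u} := ⟨1, fun _ ht => ht.1.2⟩
  have hlower : Ioc c 1 ⊆ {s | u < F s} ∩ Ioc 0 1 := fun s hs =>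
    ⟨not_le.1 fun hle => hs.1.not_ge (le_csSup hbdd ⟨⟨hc.1.trans hs.1.le, hs.2⟩, hle⟩),
      hc.1.trans_lt hs.1, hs.2⟩
  have hupper : {s | u < F s} ∩ Ioc 0 1 ⊆ Icc c 1 := fun s ⟨hs, hs0, hs1⟩ =>
    ⟨Real.sSup_le (fun t ht => not_lt.1 fun hst =>
      (hs.trans_le (hF ⟨hs0.le, hs1⟩ ht.1 hst.le)).not_ge ht.2) hs0.le, hs1⟩
  refine le_antisymm ?_ ?_
  · simpa only [Real.volume_Icc] using measure_mono (μ := volume) hupper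
  · simpa only [Real.volume_Ioc] using measure_mono (μ := volume) hlower

lemma MonotoneOn.setIntegral_Ioc_sq_eq (hF : MonotoneOn F (Icc 0 1))
    (hF01 : ∀ x ∈ Ioc (0:ℝ) 1, F x ∈ Icc (0:ℝ) 1) :
    ∫ x in Ioc (0:ℝ) 1, F x ^ 2
      = ∫ u in Ioc (0:ℝ) 1, (1 - sSup {s | s ∈ Icc (0:ℝ) 1 ∧ F s ≤ u}) * (2 * u) := by
  rw [integral_sq_eq_setIntegral_measureReal_lt
    (aemeasurable_restrict_of_monotoneOn measurableSet_Ioc (hF.mono Ioc_subset_Icc_self))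
    ((ae_restrict_mem measurableSet_Ioc).mono hF01)]
  refine setIntegral_congr_fun measurableSet_Ioc fun u _ => ?_
  rw [measureReal_def, Measure.restrict_apply' measurableSet_Ioc, hF.volume_superlevel_inter_Ioc,
    ENNReal.toReal_ofReal (sub_nonneg.2 (sSup_sublevel_mem_Icc u).2)]

end Quantile

section Integrable

variable {F : ℝ → ℝ}

lemma integrableOn_Ioc_comp_of_mem_Icc (hF : AEMeasurable F (volume.restrict (Ioc 0 1)))
    (hF01 : ∀ x ∈ Ioc (0:ℝ) 1, F x ∈ Icc (0:ℝ) 1) {φ : ℝ × ℝ → ℝ} (hφ : Continuous φ) :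
    IntegrableOn (fun x => φ (F x, x)) (Ioc 0 1) := by
  obtain ⟨C, hC⟩ := (isCompact_Icc.prod isCompact_Icc).exists_bound_of_continuousOn
    hφ.continuousOn (s := Icc (0:ℝ) 1 ×ˢ Icc (0:ℝ) 1)
  refine Integrable.of_bound
    (hφ.comp_aestronglyMeasurable (hF.prodMk aemeasurable_id).aestronglyMeasurable) C ?_
  exact (ae_restrict_mem measurableSet_Ioc).mono fun x hx =>
    hC _ ⟨hF01 x hx, hx.1.le, hx.2⟩

lemma setIntegral_Ioc_tail_add_sq (hF : AEMeasurable F (volume.restrict (Ioc 0 1)))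
    (hF01 : ∀ x ∈ Ioc (0:ℝ) 1, F x ∈ Icc (0:ℝ) 1) :
    (∫ x in Ioc (0:ℝ) 1, (1 - F x) * (2 * x)) + ∫ x in Ioc (0:ℝ) 1, F x ^ 2
      = (∫ x in (0:ℝ)..1, (F x - x) ^ 2) + 2 / 3 := by
  have hint (φ : ℝ × ℝ → ℝ) (hφ : Continuous φ) :=
    integrableOn_Ioc_comp_of_mem_Icc hF hF01 hφ
  calc (∫ x in Ioc (0:ℝ) 1, (1 - F x) * (2 * x)) + ∫ x in Ioc (0:ℝ) 1, F x ^ 2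
      = ∫ x in Ioc (0:ℝ) 1, ((1 - F x) * (2 * x) + F x ^ 2) :=
        (integral_add (hint (fun p => (1 - p.1) * (2 * p.2)) (by fun_prop))
          (hint (fun p => p.1 ^ 2) (by fun_prop))).symm
    _ = ∫ x in Ioc (0:ℝ) 1, ((F x - x) ^ 2 + (2 * x - x ^ 2)) := by
        congr 1 with x
        ring
    _ = (∫ x in (0:ℝ)..1, (F x - x) ^ 2) + ∫ x in (0:ℝ)..1, (2 * x - x ^ 2) := by
        rw [integral_add (hint (fun p => (p.1 - p.2) ^ 2) (by fun_prop))
          (by fun_prop : Continuous fun x : ℝ => 2 * x - x ^ 2).integrableOn_Ioc,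
          intervalIntegral.integral_of_le zero_le_one, intervalIntegral.integral_of_le zero_le_one]
    _ = (∫ x in (0:ℝ)..1, (F x - x) ^ 2) + 2 / 3 := by
        rw [intervalIntegral.integral_sub (intervalIntegral.intervalIntegrable_id.const_mul 2)
          (intervalIntegral.intervalIntegrable_pow 2), intervalIntegral.integral_const_mul,
          integral_id, integral_pow]
        norm_num

end Integrable

theorem stmt_3_general
    {Ω : Type*} [MeasurableSpace Ω] (ℙ : Measure Ω) [IsProbabilityMeasure ℙ]
    (F : ℝ → ℝ) (hFmono : MonotoneOn F (Icc 0 1))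
    (hF0 : ∀ x ∈ Icc (0:ℝ) 1, 0 ≤ F x) (hF1 : F 1 = 1)
    (Finv : ℝ → ℝ)
    (hFinv : ∀ x ∈ Icc (0:ℝ) 1, Finv x = sSup {s | s ∈ Icc (0:ℝ) 1 ∧ F s ≤ x})
    (X Y : Ω → ℝ) (hX : Measurable X) (hY : Measurable Y)
    (hXr : ∀ᵐ ω ∂ℙ, X ω ∈ Icc (0:ℝ) 1) (hYr : ∀ᵐ ω ∂ℙ, Y ω ∈ Icc (0:ℝ) 1)
    (hXd : ∀ x ∈ Icc (0:ℝ) 1, (ℙ {ω | X ω ≤ x}).toReal = F x)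
    (hYd : ∀ x ∈ Icc (0:ℝ) 1, (ℙ {ω | Y ω ≤ x}).toReal = Finv x) :
    (∫ ω, (X ω)^2 ∂ℙ) + (∫ ω, (Y ω)^2 ∂ℙ)
      = (∫ x in (0:ℝ)..1, (F x - x)^2) + 2/3 := by
  have hF01 : ∀ x ∈ Ioc (0:ℝ) 1, F x ∈ Icc (0:ℝ) 1 := fun x hx =>
    ⟨hF0 x (Ioc_subset_Icc_self hx),
      hF1 ▸ hFmono (Ioc_subset_Icc_self hx) (right_mem_Icc.2 zero_le_one) hx.2⟩
  have hEX : ∫ ω, X ω ^ 2 ∂ℙ = ∫ x in Ioc (0:ℝ) 1, (1 - F x) * (2 * x) := by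
    rw [integral_sq_eq_setIntegral_measureReal_lt hX.aemeasurable hXr]
    refine setIntegral_congr_fun measurableSet_Ioc fun x hx => ?_
    rw [measureReal_lt_eq_one_sub hX, measureReal_def, hXd x (Ioc_subset_Icc_self hx)]
  have hEY : ∫ ω, Y ω ^ 2 ∂ℙ = ∫ x in Ioc (0:ℝ) 1, F x ^ 2 := by
    rw [integral_sq_eq_setIntegral_measureReal_lt hY.aemeasurable hYr,
      hFmono.setIntegral_Ioc_sq_eq hF01]
    refine setIntegral_congr_fun measurableSet_Ioc fun u hu => ?_
    rw [measureReal_lt_eq_one_sub hY, measureReal_def, hYd u (Ioc_subset_Icc_self hu),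
      hFinv u (Ioc_subset_Icc_self hu)]
  rw [hEX, hEY]
  exact setIntegral_Ioc_tail_add_sq
    (aemeasurable_restrict_of_monotoneOn measurableSet_Ioc (hFmono.mono Ioc_subset_Icc_self)) hF01

/-- If `X` has distribution function `F` (a CDF on `[0,1]`) and `Y` has distribution
function the right-continuous inverse `F⁻¹`, then
`E[X²] + E[Y²] = ∫₀¹ (F(x) − x)² dx + 2/3`. -/
theorem stmt_3
    {Ω : Type*} [MeasurableSpace Ω] (ℙ : Measure Ω) [IsProbabilityMeasure ℙ]
    (F : ℝ → ℝ) (hFmono : MonotoneOn F (Icc 0 1))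
    (hFrc : ∀ x ∈ Ico (0:ℝ) 1, ContinuousWithinAt F (Ici x) x)
    (hF0 : ∀ x ∈ Icc (0:ℝ) 1, 0 ≤ F x) (hF1 : F 1 = 1)
    (Finv : ℝ → ℝ)
    (hFinv : ∀ x ∈ Icc (0:ℝ) 1, Finv x = sSup {s | s ∈ Icc (0:ℝ) 1 ∧ F s ≤ x})
    (X Y : Ω → ℝ) (hX : Measurable X) (hY : Measurable Y)
    (hXr : ∀ᵐ ω ∂ℙ, X ω ∈ Icc (0:ℝ) 1) (hYr : ∀ᵐ ω ∂ℙ, Y ω ∈ Icc (0:ℝ) 1)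
    (hXd : ∀ x ∈ Icc (0:ℝ) 1, (ℙ {ω | X ω ≤ x}).toReal = F x)
    (hYd : ∀ x ∈ Icc (0:ℝ) 1, (ℙ {ω | Y ω ≤ x}).toReal = Finv x) :
    (∫ ω, (X ω)^2 ∂ℙ) + (∫ ω, (Y ω)^2 ∂ℙ)
      = (∫ x in (0:ℝ)..1, (F x - x)^2) + 2/3 :=
  stmt_3_general ℙ F hFmono hF0 hF1 Finv hFinv X Y hX hY hXr hYr hXd hYd
end

section
/- For every integer n ≥ 3 odd, the only zeros of the Bernoulli polynomial Bₙ(x) in the interval [0,1] are 0, 1/2, and 1. -/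
/-!
If `B₂ₖ₊₃` vanished at some `x ∈ (0, 1/2)`, then together with its zeros at `0` and `1/2`,
Rolle's theorem applied twice would give `B₂ₖ₊₁` a zero in `(0, 1/2)`; by induction from
`B₁(x) = x - 1/2` this is impossible. The reflection `Bₙ(1 - x) = -Bₙ(x)` for odd `n`
transfers this to `(1/2, 1)`.
-/

open Set

theorem exists_hasDerivAt_hasDerivAt_eq_zero {f f' f'' : ℝ → ℝ} {a b c : ℝ}
    (hab : a < b) (hbc : b < c) (hfc : ContinuousOn f (Icc a c))
    (hf : ∀ x ∈ Ioo a c, HasDerivAt f (f' x) x) (hf' : ∀ x ∈ Ioo a c, HasDerivAt f' (f'' x) x)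
    (hfab : f a = f b) (hfbc : f b = f c) :
    ∃ x ∈ Ioo a c, f'' x = 0 := by
  obtain ⟨y, hy, hy0⟩ := exists_hasDerivAt_eq_zero hab (hfc.mono (Icc_subset_Icc_right hbc.le))
    hfab fun x hx ↦ hf x (Ioo_subset_Ioo_right hbc.le hx)
  obtain ⟨z, hz, hz0⟩ := exists_hasDerivAt_eq_zero hbc (hfc.mono (Icc_subset_Icc_left hab.le))
    hfbc fun x hx ↦ hf x (Ioo_subset_Ioo_left hab.le hx)
  have hyz : Icc y z ⊆ Ioo a c := Icc_subset_Ioo hy.1 hz.2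
  obtain ⟨w, hw, hw0⟩ := exists_hasDerivAt_eq_zero (hy.2.trans hz.1)
    (fun x hx ↦ (hf' x (hyz hx)).continuousAt.continuousWithinAt) (hy0.trans hz0.symm)
    fun x hx ↦ hf' x (hyz (Ioo_subset_Icc_self hx))
  exact ⟨w, hyz (Ioo_subset_Icc_self hw), hw0⟩

theorem hasDerivAt_bernoulliFun_succ (k : ℕ) (x : ℝ) :
    HasDerivAt (bernoulliFun (k + 1)) ((k + 1) * bernoulliFun k x) x := by
  simpa using hasDerivAt_bernoulliFun (k + 1) x

theorem bernoulliFun_eval_zero_eq_zero_of_odd {n : ℕ} (hn : Odd n) (h1 : 1 < n) :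
    bernoulliFun n 0 = 0 := by
  rw [bernoulliFun_eval_zero, bernoulli_eq_zero_of_odd hn h1, Rat.cast_zero]

theorem bernoulliFun_two_mul_add_one_ne_zero (k : ℕ) :
    ∀ x ∈ Ioo (0 : ℝ) 2⁻¹, bernoulliFun (2 * k + 1) x ≠ 0 := by
  induction k with
  | zero =>
    intro x hx
    rw [mul_zero, zero_add, bernoulliFun_one]
    linarith [hx.2]
  | succ k ih =>
    intro x hx hx0
    set m := 2 * k + 1
    have hm : 2 * (k + 1) + 1 = m + 1 + 1 := by omega
    rw [hm] at hx0
    obtain ⟨w, hw, hw0⟩ := exists_hasDerivAt_hasDerivAt_eq_zero hx.1 hx.2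
      (continuous_bernoulliFun _).continuousOn
      (fun y _ ↦ hasDerivAt_bernoulliFun_succ (m + 1) y)
      (fun y _ ↦ (hasDerivAt_bernoulliFun_succ m y).const_mul _)
      ((bernoulliFun_eval_zero_eq_zero_of_odd ⟨k + 1, hm.symm⟩ (by omega)).trans hx0.symm)
      (hx0.trans (hm ▸ bernoulliFun_eval_half_eq_zero (k + 1)).symm)
    refine ih w hw ?_
    simpa [Nat.cast_add_one_ne_zero, show (m : ℝ) + 1 + 1 ≠ 0 by positivity] using hw0

theorem bernoulliFun_two_mul_add_one_ne_zero_of_mem_Ioo (k : ℕ) {x : ℝ} (hx : x ∈ Ioo (0 : ℝ) 1)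
    (hx2 : x ≠ 2⁻¹) : bernoulliFun (2 * k + 1) x ≠ 0 := by
  rcases hx2.lt_or_gt with hlt | hgt
  · exact bernoulliFun_two_mul_add_one_ne_zero k x ⟨hx.1, hlt⟩
  · have h := bernoulliFun_two_mul_add_one_ne_zero k (1 - x) ⟨by linarith [hx.2], by linarith⟩
    rwa [bernoulliFun_eval_one_sub, mul_ne_zero_iff, and_iff_right (by simp)] at h

/-- For odd `n ≥ 3`, the only zeros of the Bernoulli polynomial `Bₙ` in `[0,1]`
are `0`, `1/2` and `1`. -/
theorem stmt_4 (n : ℕ) (hn : 3 ≤ n) (hodd : Odd n) :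
    ∀ x ∈ Icc (0:ℝ) 1,
      (Polynomial.aeval x (Polynomial.bernoulli n) = 0 ↔
        x = 0 ∨ x = 1/2 ∨ x = 1) := by
  intro x hx
  rw [← Polynomial.eval_map_algebraMap, ← bernoulliFun, one_div]
  have hzero : bernoulliFun n 0 = 0 := bernoulliFun_eval_zero_eq_zero_of_odd hodd (by omega)
  obtain ⟨k, rfl⟩ := hodd
  constructor
  · intro hx0
    by_contra! hne
    exact bernoulliFun_two_mul_add_one_ne_zero_of_mem_Ioo k
      ⟨hx.1.lt_of_ne hne.1.symm, hx.2.lt_of_ne hne.2.2⟩ hne.2.1 hx0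
  · rintro (rfl | rfl | rfl)
    · exact hzero
    · exact bernoulliFun_eval_half_eq_zero k
    · rwa [bernoulliFun_endpoints_eq_of_ne_one (by omega)]
end

section
/- For every even integer n ≥ 2, the Bernoulli polynomial Bₙ(x) has exactly two zeros in [0,1], one lying in (0,1/2) and one in (1/2,1). -/
open Set Polynomial

private lemma bf_cont (k : ℕ) : Continuous (bernoulliFun k) := by
  unfold bernoulliFun; exact Polynomial.continuous _


lemma bf_symm : ∀ (n : ℕ) (x : ℝ), bernoulliFun n (1 - x) = (-1)^n * bernoulliFun n x := by
  intro n
  induction n with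
  | zero => intro x; simp [bernoulliFun]
  | succ k ih =>
    have hg : ∀ x : ℝ, HasDerivAt
        (fun y => bernoulliFun (k+1) (1 - y) - (-1:ℝ)^(k+1) * bernoulliFun (k+1) y) 0 x := by
      intro x
      have hlin : HasDerivAt (fun y : ℝ => 1 - y) (-1) x := by
        simpa using (hasDerivAt_id x).const_sub 1
      have h1 := (hasDerivAt_bernoulliFun (k+1) (1 - x)).comp x hlin
      have h2 := (hasDerivAt_bernoulliFun (k+1) x).const_mul ((-1:ℝ)^(k+1))
      have h3 := h1.sub h2
      refine h3.congr_deriv ?_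
      simp only [Nat.add_sub_cancel, ih x]
      push_cast
      ring
    have hconst := is_const_of_deriv_eq_zero
      (fun x => (hg x).differentiableAt) (fun x => (hg x).deriv)
    intro x
    have h0 : bernoulliFun (k+1) (1 - x) - (-1:ℝ)^(k+1) * bernoulliFun (k+1) x
        = bernoulliFun (k+1) 1 - (-1:ℝ)^(k+1) * bernoulliFun (k+1) 0 := by
      simpa using hconst x 0
    have hz : bernoulliFun (k+1) 1 - (-1:ℝ)^(k+1) * bernoulliFun (k+1) 0 = 0 := by
      rcases eq_or_ne (k+1) 1 with h1 | h1
      · rw [h1]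
        norm_num [bernoulliFun_eval_one, bernoulliFun_eval_zero, _root_.bernoulli_one]
      · rw [bernoulliFun_endpoints_eq_of_ne_one h1]
        rcases Nat.even_or_odd (k+1) with he | ho
        · rw [Even.neg_one_pow he]; ring
        · rw [Odd.neg_one_pow ho, bernoulliFun_eval_zero]
          have : _root_.bernoulli (k+1) = 0 := by
            rw [bernoulli_eq_bernoulli'_of_ne_one h1, bernoulli'_eq_zero_of_odd ho (by omega)]
          rw [this]; norm_num
    linarith [sub_eq_zero.mp (h0.trans hz)]

private lemma bf_odd_half {n : ℕ} (ho : Odd n) : bernoulliFun n (1/2) = 0 := by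
  have h := bf_symm n (1/2)
  rw [Odd.neg_one_pow ho] at h
  norm_num at h
  linarith

lemma evenStruct (k : ℕ)
    (hk : ∀ x ∈ Ioo (0:ℝ) (1/2), 0 < (-1:ℝ)^(k+1) * bernoulliFun (2*k+1) x) :
    ∃ a ∈ Ioo (0:ℝ) (1/2),
      (-1:ℝ)^(k+1) * bernoulliFun (2*k+2) a = 0 ∧
      StrictMonoOn (fun x => (-1:ℝ)^(k+1) * bernoulliFun (2*k+2) x) (Icc 0 (1/2)) := by
  set c : ℝ := (-1:ℝ)^(k+1) with hc
  set f : ℝ → ℝ := fun x => c * bernoulliFun (2*k+2) x with hfdef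
  have hf' : ∀ x : ℝ, HasDerivAt f (((2*k+2 : ℕ) : ℝ) * (c * bernoulliFun (2*k+1) x)) x := by
    intro x
    have h := (hasDerivAt_bernoulliFun (2*k+2) x).const_mul c
    have he : (2*k+2) - 1 = 2*k+1 := by omega
    rw [he] at h
    refine h.congr_deriv ?_
    ring
  have hfc : Continuous f := continuous_const.mul (bf_cont _)
  have hmono : StrictMonoOn f (Icc 0 (1/2)) := by
    apply strictMonoOn_of_deriv_pos (convex_Icc _ _) hfc.continuousOn
    intro x hx
    rw [interior_Icc] at hx
    rw [(hf' x).deriv]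
    have h1 := hk x hx
    have h2 : (0:ℝ) < ((2*k+2 : ℕ) : ℝ) := by positivity
    exact mul_pos h2 h1
  set g : ℝ → ℝ := fun x => c * bernoulliFun (2*k+3) x with hgdef
  have hg' : ∀ x : ℝ, HasDerivAt g (((2*k+3 : ℕ) : ℝ) * f x) x := by
    intro x
    have h := (hasDerivAt_bernoulliFun (2*k+3) x).const_mul c
    have he : (2*k+3) - 1 = 2*k+2 := by omega
    rw [he] at h
    refine h.congr_deriv ?_
    simp only [hfdef]
    ring
  have hgc : Continuous g := continuous_const.mul (bf_cont _)
  have hg0 : g 0 = 0 := by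
    have hb : _root_.bernoulli (2*k+3) = 0 := by
      rw [bernoulli_eq_bernoulli'_of_ne_one (by omega),
        bernoulli'_eq_zero_of_odd (Nat.odd_iff.mpr (by omega)) (by omega)]
    simp only [hgdef, bernoulliFun_eval_zero, hb]
    norm_num
  have hgh : g (1/2) = 0 := by
    simp only [hgdef]
    rw [bf_odd_half (Nat.odd_iff.mpr (by omega)), mul_zero]
  have h00 : (0:ℝ) ∈ Icc (0:ℝ) (1/2) := ⟨le_rfl, by norm_num⟩
  have hhh : (1/2:ℝ) ∈ Icc (0:ℝ) (1/2) := ⟨by norm_num, le_rfl⟩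
  have hA : f 0 < 0 := by
    by_contra h
    push_neg at h
    have hgm : StrictMonoOn g (Icc 0 (1/2)) := by
      apply strictMonoOn_of_deriv_pos (convex_Icc _ _) hgc.continuousOn
      intro x hx
      rw [interior_Icc] at hx
      rw [(hg' x).deriv]
      have hfx : 0 < f x := lt_of_le_of_lt h (hmono h00 ⟨hx.1.le, hx.2.le⟩ hx.1)
      positivity
    have := hgm h00 hhh (by norm_num)
    rw [hg0, hgh] at this
    exact lt_irrefl 0 this
  have hB : 0 < f (1/2) := by
    by_contra h
    push_neg at h
    have hgm : StrictAntiOn g (Icc 0 (1/2)) := by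
      apply strictAntiOn_of_deriv_neg (convex_Icc _ _) hgc.continuousOn
      intro x hx
      rw [interior_Icc] at hx
      rw [(hg' x).deriv]
      have hfx : f x < 0 := lt_of_lt_of_le (hmono ⟨hx.1.le, hx.2.le⟩ hhh hx.2) h
      have h2 : (0:ℝ) < ((2*k+3 : ℕ) : ℝ) := by positivity
      exact mul_neg_of_pos_of_neg h2 hfx
    have := hgm h00 hhh (by norm_num)
    rw [hg0, hgh] at this
    exact lt_irrefl 0 this
  have hiv : (0:ℝ) ∈ f '' Ioo 0 (1/2) :=
    intermediate_value_Ioo (by norm_num) hfc.continuousOn ⟨hA, hB⟩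
  obtain ⟨a, ha, hfa⟩ := hiv
  exact ⟨a, ha, hfa, hmono⟩

lemma key : ∀ k : ℕ, ∀ x ∈ Ioo (0:ℝ) (1/2), 0 < (-1:ℝ)^(k+1) * bernoulliFun (2*k+1) x := by
  intro k
  induction k with
  | zero =>
    intro x hx
    have h1 : bernoulliFun 1 x = x - 1/2 := by
      simp [bernoulliFun, Polynomial.bernoulli, Finset.sum_range_succ]
      norm_num; ring
    simp only [pow_one, Nat.mul_zero, Nat.zero_add, h1]
    have := hx.2
    nlinarith [hx.1, hx.2]
  | succ k ih =>
    obtain ⟨a, ha, hfa, hmono⟩ := evenStruct k ih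
    set c : ℝ := (-1:ℝ)^(k+1) with hc
    set f : ℝ → ℝ := fun x => c * bernoulliFun (2*k+2) x with hfdef
    set g : ℝ → ℝ := fun x => c * bernoulliFun (2*k+3) x with hgdef
    have hg' : ∀ x : ℝ, HasDerivAt g (((2*k+3 : ℕ) : ℝ) * f x) x := by
      intro x
      have h := (hasDerivAt_bernoulliFun (2*k+3) x).const_mul c
      have he : (2*k+3) - 1 = 2*k+2 := by omega
      rw [he] at h
      refine h.congr_deriv ?_
      simp only [hfdef]; ring
    have hgc : Continuous g := continuous_const.mul (bf_cont _)
    have hg0 : g 0 = 0 := by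
      have hb : _root_.bernoulli (2*k+3) = 0 := by
        rw [bernoulli_eq_bernoulli'_of_ne_one (by omega),
          bernoulli'_eq_zero_of_odd (Nat.odd_iff.mpr (by omega)) (by omega)]
      simp only [hgdef, bernoulliFun_eval_zero, hb]
      norm_num
    have hgh : g (1/2) = 0 := by
      simp only [hgdef]
      rw [bf_odd_half (Nat.odd_iff.mpr (by omega)), mul_zero]
    -- show g x < 0 on (0, 1/2)
    have hneg : ∀ x ∈ Ioo (0:ℝ) (1/2), g x < 0 := by
      intro x hx
      rcases le_or_gt x a with hxa | hax
      · -- g strictly decreasing on [0, a]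
        have hanti : StrictAntiOn g (Icc 0 a) := by
          apply strictAntiOn_of_deriv_neg (convex_Icc _ _) hgc.continuousOn
          intro y hy
          rw [interior_Icc] at hy
          rw [(hg' y).deriv]
          have hfy : f y < f a := hmono ⟨hy.1.le, (hy.2.trans ha.2).le⟩ ⟨ha.1.le, ha.2.le⟩ hy.2
          have hfa' : f a = 0 := hfa
          rw [hfa'] at hfy
          have h2 : (0:ℝ) < ((2*k+3 : ℕ) : ℝ) := by positivity
          exact mul_neg_of_pos_of_neg h2 hfy
        have := hanti ⟨le_rfl, ha.1.le⟩ ⟨hx.1.le, hxa⟩ hx.1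
        rw [hg0] at this
        exact this
      · -- g strictly increasing on [a, 1/2]
        have hmo : StrictMonoOn g (Icc a (1/2)) := by
          apply strictMonoOn_of_deriv_pos (convex_Icc _ _) hgc.continuousOn
          intro y hy
          rw [interior_Icc] at hy
          rw [(hg' y).deriv]
          have hfy : f a < f y := hmono ⟨ha.1.le, ha.2.le⟩ ⟨(ha.1.trans hy.1).le, hy.2.le⟩ hy.1
          have hfa' : f a = 0 := hfa
          rw [hfa'] at hfy
          positivity
        have := hmo ⟨hax.le, hx.2.le⟩ ⟨ha.2.le, le_rfl⟩ hx.2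
        rw [hgh] at this
        exact this
    intro x hx
    have := hneg x hx
    have heq : (2*(k+1)+1) = 2*k+3 := by omega
    rw [heq]
    have : c * bernoulliFun (2*k+3) x < 0 := this
    have hcc : (-1:ℝ)^(k+1+1) = -c := by rw [hc]; ring
    rw [hcc]
    linarith

/-- For even `n ≥ 2`, the Bernoulli polynomial `Bₙ` has exactly two zeros in `[0,1]`,
one in `(0,1/2)` and one in `(1/2,1)`. -/
theorem stmt_5 (n : ℕ) (hn : 2 ≤ n) (heven : Even n) :
    ∃ a ∈ Ioo (0:ℝ) (1/2), ∃ b ∈ Ioo (1/2:ℝ) 1,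
      ∀ x ∈ Icc (0:ℝ) 1,
        (Polynomial.aeval x (Polynomial.bernoulli n) = 0 ↔ x = a ∨ x = b) := by
  have hbridge : ∀ x : ℝ, (Polynomial.aeval x (Polynomial.bernoulli n) : ℝ)
      = bernoulliFun n x := by
    intro x
    rw [bernoulliFun, Polynomial.eval_map, Polynomial.aeval_def]
  obtain ⟨m, hm⟩ := heven
  obtain ⟨k, rfl⟩ : ∃ k : ℕ, n = 2*k+2 := ⟨m - 1, by omega⟩
  obtain ⟨a, ha, hfa, hmono⟩ := evenStruct k (key k)
  set c : ℝ := (-1:ℝ)^(k+1) with hc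
  have hcne : c ≠ 0 := by
    rw [hc]; exact pow_ne_zero _ (by norm_num)
  have hzero : ∀ y : ℝ, bernoulliFun (2*k+2) y = 0 ↔ c * bernoulliFun (2*k+2) y = 0 := by
    intro y
    constructor
    · intro h; rw [h, mul_zero]
    · intro h; rcases mul_eq_zero.mp h with h | h
      · exact absurd h hcne
      · exact h
  have hchar : ∀ x ∈ Icc (0:ℝ) (1/2), (bernoulliFun (2*k+2) x = 0 ↔ x = a) := by
    intro x hx
    constructor
    · intro h
      have h1 : c * bernoulliFun (2*k+2) x = 0 := (hzero x).mp h
      exact hmono.injOn hx ⟨ha.1.le, ha.2.le⟩ (by rw [h1, hfa])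
    · intro h
      rw [h]
      exact (hzero a).mpr hfa
  refine ⟨a, ha, 1 - a, ⟨by linarith [ha.2], by linarith [ha.1]⟩, ?_⟩
  intro x hx
  rw [hbridge]
  have hsym : ∀ y : ℝ, bernoulliFun (2*k+2) (1 - y) = bernoulliFun (2*k+2) y := by
    intro y
    rw [bf_symm, Even.neg_one_pow (by exact ⟨k+1, by ring⟩), one_mul]
  rcases le_or_gt x (1/2) with hx2 | hx2
  · rw [hchar x ⟨hx.1, hx2⟩]
    constructor
    · exact fun h => Or.inl h
    · rintro (h | h)
      · exact h
      · exfalso; rw [h] at hx2; linarith [ha.2]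
  · have h1x : (1 - x) ∈ Icc (0:ℝ) (1/2) := ⟨by linarith [hx.2], by linarith⟩
    rw [← hsym x, hchar (1-x) h1x]
    constructor
    · intro h; right; linarith
    · rintro (h | h)
      · exfalso; rw [h] at hx2; linarith [ha.2]
      · linarith [h]
end

section
/- For every integer n ≥ 2, the Bernoulli polynomials Bₙ(x) and B_{n+1}(x) have no common zero in the interval [0,1]. -/
/-!
The odd Bernoulli polynomial `B_{2k+1}`, `k ≥ 1`, vanishes at `0`, `1/2` and `1`, and it has no
other zero in `[0,1]`: a further zero would give, by Rolle's theorem applied twice, a zero of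
`B_{2k-1} = B''_{2k+1} / ((2k+1)(2k))` strictly inside `(0,1/2)` or `(1/2,1)`, which is excluded
inductively down to `B_1 = x - 1/2`. The even polynomial `B_{2k}` does not vanish at these points,
since `B_{2k}(0) = B_{2k}(1) = B_{2k}` and `B_{2k}(1/2) = (2^{1-2k} - 1) B_{2k}`, where `B_{2k} ≠ 0`
because `ζ(2k) ≥ 1` is a multiple of it.
-/

open Set

lemma aeval_bernoulli_eq_bernoulliFun (n : ℕ) (x : ℝ) :
    Polynomial.aeval x (Polynomial.bernoulli n) = bernoulliFun n x := by
  rw [bernoulliFun, Polynomial.aeval_def, Polynomial.eval_map]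

lemma bernoulli_two_mul_ne_zero {k : ℕ} (hk : k ≠ 0) : bernoulli (2 * k) ≠ 0 := by
  intro h
  have hzeta := hasSum_zeta_nat hk
  rw [h, Rat.cast_zero, mul_zero, zero_div] at hzeta
  have := le_hasSum hzeta 1 fun _ _ => by positivity
  norm_num at this

lemma bernoulliFun_two_mul_ne_zero {k : ℕ} (hk : k ≠ 0) {x : ℝ} (hx : x ∈ ({0, 2⁻¹, 1} : Set ℝ)) :
    bernoulliFun (2 * k) x ≠ 0 := by
  have hB : (bernoulli (2 * k) : ℝ) ≠ 0 := Rat.cast_ne_zero.mpr (bernoulli_two_mul_ne_zero hk)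
  rcases hx with rfl | rfl | rfl
  · rwa [bernoulliFun_eval_zero]
  · have h4 : (4 : ℝ) ≤ 2 ^ (2 * k) := by
      calc (4 : ℝ) = 2 ^ 2 := by norm_num
        _ ≤ 2 ^ (2 * k) := pow_le_pow_right₀ one_le_two (by omega)
    rw [bernoulliFun_eval_half]
    refine mul_ne_zero (sub_ne_zero.mpr (ne_of_lt ?_)) hB
    rw [div_lt_one (by positivity)]
    linarith
  · rwa [bernoulliFun_endpoints_eq_of_ne_one (by omega), bernoulliFun_eval_zero]

lemma bernoulliFun_two_mul_add_one_eval_zero {k : ℕ} (hk : k ≠ 0) :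
    bernoulliFun (2 * k + 1) 0 = 0 := by
  rw [bernoulliFun_eval_zero, bernoulli_eq_bernoulli'_of_ne_one (by omega),
    bernoulli'_eq_zero_of_odd (odd_two_mul_add_one k) (by omega), Rat.cast_zero]

lemma bernoulliFun_two_mul_add_one_eval_one {k : ℕ} (hk : k ≠ 0) :
    bernoulliFun (2 * k + 1) 1 = 0 := by
  rw [bernoulliFun_endpoints_eq_of_ne_one (by omega), bernoulliFun_two_mul_add_one_eval_zero hk]

lemma exists_mem_Ioo_bernoulliFun_eq_zero {m : ℕ} {a b : ℝ} (hab : a < b)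
    (ha : bernoulliFun (m + 1) a = 0) (hb : bernoulliFun (m + 1) b = 0) :
    ∃ c ∈ Ioo a b, bernoulliFun m c = 0 := by
  obtain ⟨c, hc, hderiv⟩ := exists_hasDerivAt_eq_zero hab (continuous_bernoulliFun _).continuousOn
    (ha.trans hb.symm) fun y _ => hasDerivAt_bernoulliFun (m + 1) y
  exact ⟨c, hc, (mul_eq_zero.mp hderiv).resolve_left (Nat.cast_ne_zero.mpr m.succ_ne_zero)⟩

lemma exists_mem_Ioo_bernoulliFun_eq_zero_of_three {m : ℕ} {a x b : ℝ} (hax : a < x) (hxb : x < b)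
    (ha : bernoulliFun (m + 2) a = 0) (hx : bernoulliFun (m + 2) x = 0)
    (hb : bernoulliFun (m + 2) b = 0) :
    ∃ c ∈ Ioo a b, bernoulliFun m c = 0 := by
  obtain ⟨c₁, hc₁, hz₁⟩ := exists_mem_Ioo_bernoulliFun_eq_zero hax ha hx
  obtain ⟨c₂, hc₂, hz₂⟩ := exists_mem_Ioo_bernoulliFun_eq_zero hxb hx hb
  obtain ⟨c, hc, hz⟩ := exists_mem_Ioo_bernoulliFun_eq_zero (hc₁.2.trans hc₂.1) hz₁ hz₂
  exact ⟨c, ⟨hc₁.1.trans hc.1, hc.2.trans hc₂.2⟩, hz⟩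

lemma mem_of_bernoulliFun_two_mul_add_one_eq_zero (k : ℕ) {x : ℝ} (hx : x ∈ Icc (0 : ℝ) 1)
    (hzero : bernoulliFun (2 * k + 1) x = 0) : x ∈ ({0, 2⁻¹, 1} : Set ℝ) := by
  induction k generalizing x with
  | zero =>
    rw [mul_zero, zero_add, bernoulliFun_one, sub_eq_zero] at hzero
    exact Or.inr (Or.inl (hzero.trans (one_div 2)))
  | succ k ih =>
    by_contra hx'
    simp only [mem_insert_iff, mem_singleton_iff, not_or] at hx'
    obtain ⟨hx0, hxhalf, hx1⟩ := hx'
    have h0 := bernoulliFun_two_mul_add_one_eval_zero k.succ_ne_zero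
    have hhalf := bernoulliFun_eval_half_eq_zero (k + 1)
    have h1 := bernoulliFun_two_mul_add_one_eval_one k.succ_ne_zero
    rw [show 2 * (k + 1) + 1 = 2 * k + 1 + 2 by ring] at h0 hhalf h1 hzero
    obtain ⟨c, hc, hzc⟩ : ∃ c ∈ Ioo (0 : ℝ) 2⁻¹ ∪ Ioo 2⁻¹ 1, bernoulliFun (2 * k + 1) c = 0 := by
      rcases lt_or_gt_of_ne hxhalf with hlt | hgt
      · obtain ⟨c, hc, hzc⟩ := exists_mem_Ioo_bernoulliFun_eq_zero_of_three
          (lt_of_le_of_ne hx.1 (Ne.symm hx0)) hlt h0 hzero hhalf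
        exact ⟨c, Or.inl hc, hzc⟩
      · obtain ⟨c, hc, hzc⟩ := exists_mem_Ioo_bernoulliFun_eq_zero_of_three
          hgt (lt_of_le_of_ne hx.2 hx1) hhalf hzero h1
        exact ⟨c, Or.inr hc, hzc⟩
    have hcIcc : c ∈ Icc (0 : ℝ) 1 := by
      rcases hc with hc | hc <;> constructor <;> linarith [hc.1, hc.2]
    rcases ih hcIcc hzc with rfl | rfl | rfl <;> rcases hc with hc | hc <;> norm_num at hc

/-- For `n ≥ 2`, the Bernoulli polynomials `Bₙ` and `B_{n+1}` have no common zero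
in `[0,1]`. -/
theorem stmt_6 (n : ℕ) (hn : 2 ≤ n) :
    ∀ x ∈ Icc (0:ℝ) 1,
      ¬(Polynomial.aeval x (Polynomial.bernoulli n) = 0 ∧
        Polynomial.aeval x (Polynomial.bernoulli (n+1)) = 0) := by
  rintro x hx ⟨hn₀, hn₁⟩
  rw [aeval_bernoulli_eq_bernoulliFun] at hn₀ hn₁
  obtain ⟨k, rfl | rfl⟩ := Nat.even_or_odd' n
  · exact bernoulliFun_two_mul_ne_zero (by omega)
      (mem_of_bernoulliFun_two_mul_add_one_eq_zero k hx hn₁) hn₀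
  · exact bernoulliFun_two_mul_ne_zero k.succ_ne_zero
      (mem_of_bernoulliFun_two_mul_add_one_eq_zero k hx hn₀) hn₁
end

section
/- Let n ≥ 1, let ω = 2πit for a nonzero integer t, and define Iₙ = ∫₀¹ x(1 − e^{ωx})ⁿ dx. Then Iₙ = 1/2 − Hₙ/ω, where Hₙ = 1 + 1/2 + ⋯ + 1/n. -/
open Complex Finset

private lemma alt_harm (n : ℕ) :
    ∑ k ∈ Finset.range n, (-1:ℂ)^(k+1) * (n.choose (k+1) : ℂ) / (k+1)
      = -(harmonic n : ℂ) := by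
  induction n with
  | zero => simp
  | succ n ih =>
    have hdiv : ∀ k : ℕ, (n.choose k : ℂ) / (k+1) = ((n+1).choose (k+1) : ℂ) / (n+1) := by
      intro k
      have h := Nat.add_one_mul_choose_eq n k
      have h2 : ((n:ℂ)+1) * n.choose k = ((n+1).choose (k+1) : ℂ) * (k+1) := by
        exact_mod_cast congrArg (Nat.cast : ℕ → ℂ) h
      have hk : ((k:ℂ)+1) ≠ 0 := Nat.cast_add_one_ne_zero k
      have hn : ((n:ℂ)+1) ≠ 0 := Nat.cast_add_one_ne_zero n
      field_simp
      linear_combination h2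
    have halt : ∑ k ∈ Finset.range (n+2), ((-1:ℂ)^k * ((n+1).choose k : ℂ)) = 0 := by
      have := Int.alternating_sum_range_choose_of_ne (Nat.succ_ne_zero n)
      exact_mod_cast congrArg (Int.cast : ℤ → ℂ) this
    have halt' : ∑ k ∈ Finset.range (n+1), ((-1:ℂ)^(k+1) * ((n+1).choose (k+1) : ℂ)) = -1 := by
      have h := Finset.sum_range_succ' (fun k => ((-1:ℂ)^k * ((n+1).choose k : ℂ))) (n+1)
      rw [halt] at h
      simp only [pow_zero, one_mul, Nat.choose_zero_right, Nat.cast_one] at h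
      linear_combination -h
    have split : ∀ k ∈ Finset.range (n+1),
        (-1:ℂ)^(k+1) * ((n+1).choose (k+1) : ℂ) / (k+1)
          = (-1:ℂ)^(k+1) * (n.choose (k+1) : ℂ) / (k+1)
            + ((-1:ℂ)^(k+1) * ((n+1).choose (k+1) : ℂ)) / (n+1) := by
      intro k _
      have hp : ((n+1).choose (k+1) : ℂ) = (n.choose (k+1) : ℂ) + (n.choose k : ℂ) := by
        rw [Nat.choose_succ_succ]; push_cast; ring
      linear_combination ((-1:ℂ)^(k+1)/((k:ℂ)+1)) * hp + ((-1:ℂ)^(k+1)) * hdiv k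
    rw [Finset.sum_congr rfl split, Finset.sum_add_distrib]
    have h1 : ∑ k ∈ Finset.range (n+1), (-1:ℂ)^(k+1) * (n.choose (k+1) : ℂ) / (k+1)
        = -(harmonic n : ℂ) := by
      rw [Finset.sum_range_succ, Nat.choose_succ_self]
      simpa using ih
    have h2 : ∑ k ∈ Finset.range (n+1), ((-1:ℂ)^(k+1) * ((n+1).choose (k+1) : ℂ)) / (n+1)
        = -1 / (n+1) := by
      rw [← Finset.sum_div, halt']
    rw [h1, h2, harmonic_succ]
    push_cast
    ring

private lemma integral_x_exp (c : ℂ) (hc : c ≠ 0) :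
    ∫ x in (0:ℝ)..1, (x : ℂ) * Complex.exp (c * x)
      = (1/c - 1/c^2) * Complex.exp c + 1/c^2 := by
  have key : ∀ x ∈ Set.uIcc (0:ℝ) 1,
      HasDerivAt (fun x : ℝ => ((x:ℂ)/c - 1/c^2) * Complex.exp (c * x))
        ((x:ℂ) * Complex.exp (c * x)) x := by
    intro x _
    have h1 : HasDerivAt (fun x : ℝ => (x : ℂ)) 1 x := by
      simpa using (hasDerivAt_id x).ofReal_comp
    have h2 : HasDerivAt (fun x : ℝ => Complex.exp (c * x))
        (Complex.exp (c * x) * (c * 1)) x := (h1.const_mul c).cexp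
    have h3 : HasDerivAt (fun x : ℝ => ((x:ℂ)/c - 1/c^2)) (1/c) x :=
      (h1.div_const c).sub_const (1/c^2)
    have := h3.mul h2
    refine HasDerivAt.congr_deriv this ?_
    field_simp
    ring
  rw [intervalIntegral.integral_eq_sub_of_hasDerivAt key]
  · push_cast
    field_simp
    simp
  · apply Continuous.intervalIntegrable
    exact (Complex.continuous_ofReal).mul (Complex.continuous_exp.comp
      (continuous_const.mul Complex.continuous_ofReal))

private lemma integral_x : ∫ x in (0:ℝ)..1, (x : ℂ) = 1/2 := by
  rw [intervalIntegral.integral_ofReal, integral_id]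
  norm_num

/-- For `ω = 2πit` with `t` a nonzero integer and `n ≥ 1`,
`∫₀¹ x(1 − e^{ωx})ⁿ dx = 1/2 − Hₙ/ω` where `Hₙ` is the harmonic number. -/
theorem stmt_8 (n : ℕ) (hn : 1 ≤ n) (t : ℤ) (ht : t ≠ 0) :
    ∫ x in (0:ℝ)..1,
        (x : ℂ) * (1 - Complex.exp ((2 * Real.pi * Complex.I * t) * x))^n
      = 1/2 - (harmonic n : ℂ) / (2 * Real.pi * Complex.I * t) := by
  set ω : ℂ := 2 * Real.pi * Complex.I * t with hω_def
  have hω : ω ≠ 0 := by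
    simp only [hω_def]
    apply mul_ne_zero
    apply mul_ne_zero
    · norm_num [Real.pi_ne_zero]
    · exact Complex.I_ne_zero
    · exact_mod_cast ht
  have hexpand : ∀ x : ℝ,
      (x : ℂ) * (1 - Complex.exp (ω * x))^n
        = ∑ k ∈ Finset.range (n+1),
            (-1:ℂ)^k * (n.choose k : ℂ) * ((x:ℂ) * Complex.exp ((k : ℂ) * ω * x)) := by
    intro x
    have : (1 - Complex.exp (ω * x))^n = (-(Complex.exp (ω * x)) + 1)^n := by ring_nf
    rw [this, add_pow, Finset.mul_sum]
    apply Finset.sum_congr rfl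
    intro k _
    have hek : Complex.exp ((k : ℂ) * ω * x) = Complex.exp (ω * x) ^ k := by
      rw [mul_assoc, Complex.exp_nat_mul]
    rw [hek, neg_pow]
    ring
  simp_rw [hexpand]
  rw [intervalIntegral.integral_finset_sum]
  · have hterm : ∀ k : ℕ,
        ∫ x in (0:ℝ)..1, (-1:ℂ)^k * (n.choose k : ℂ) * ((x:ℂ) * Complex.exp ((k : ℂ) * ω * x))
          = (-1:ℂ)^k * (n.choose k : ℂ) * ∫ x in (0:ℝ)..1, (x:ℂ) * Complex.exp ((k : ℂ) * ω * x) := by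
      intro k
      exact intervalIntegral.integral_const_mul _ _
    simp_rw [hterm]
    rw [Finset.sum_range_succ']
    have h0 : (-1:ℂ)^0 * (n.choose 0 : ℂ) * ∫ x in (0:ℝ)..1, (x:ℂ) * Complex.exp ((0:ℕ) * ω * x)
        = 1/2 := by
      simp [integral_x]
    have hk : ∀ k : ℕ,
        ∫ x in (0:ℝ)..1, (x:ℂ) * Complex.exp (((k+1 : ℕ) : ℂ) * ω * x)
          = 1 / (((k:ℂ)+1) * ω) := by
      intro k
      have hc : ((k:ℂ)+1) * ω ≠ 0 :=
        mul_ne_zero (Nat.cast_add_one_ne_zero k) hω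
      have := integral_x_exp (((k:ℂ)+1) * ω) hc
      have hE : Complex.exp (((k:ℂ)+1) * ω) = 1 := by
        have : ((k:ℂ)+1) * ω = (((k+1 : ℕ) * t : ℤ) : ℂ) * (2 * Real.pi * Complex.I) := by
          rw [hω_def]; push_cast; ring
        rw [this, Complex.exp_int_mul_two_pi_mul_I]
      push_cast at this ⊢
      rw [this, hE]
      field_simp
      ring
    simp_rw [hk]
    have hsum : ∑ k ∈ Finset.range n,
        (-1:ℂ)^(k+1) * (n.choose (k+1) : ℂ) * (1 / (((k:ℂ)+1) * ω))
          = -(harmonic n : ℂ) / ω := by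
      have := alt_harm n
      calc ∑ k ∈ Finset.range n, (-1:ℂ)^(k+1) * (n.choose (k+1) : ℂ) * (1 / (((k:ℂ)+1) * ω))
          = (∑ k ∈ Finset.range n, (-1:ℂ)^(k+1) * (n.choose (k+1) : ℂ) / ((k:ℂ)+1)) / ω := by
            rw [Finset.sum_div]
            apply Finset.sum_congr rfl
            intro k _
            have hk1 : ((k:ℂ)+1) ≠ 0 := Nat.cast_add_one_ne_zero k
            field_simp
        _ = -(harmonic n : ℂ) / ω := by
            rw [show (∑ k ∈ Finset.range n, (-1:ℂ)^(k+1) * (n.choose (k+1) : ℂ) / ((k:ℂ)+1))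
              = -(harmonic n : ℂ) from by exact_mod_cast this]
    rw [h0, hsum]
    ring
  · intro k _
    apply Continuous.intervalIntegrable
    apply Continuous.mul continuous_const
    exact (Complex.continuous_ofReal).mul (Complex.continuous_exp.comp
      (continuous_const.mul Complex.continuous_ofReal))
end
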